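/- arXiv:1312.1844 — 12 statements merged into one kernel-verified Lean document; each statement's English description precedes it below -/
import Mathlib

section
/- Suppose β = 4. Let n ≥ 0 be an integer and let p be an odd prime with p > 2r−1 and p > n. Then the image of the rational number c̃_{2n} under the unique ring homomorphism ℚ → 𝔽_p into the field with p elements equals (−1)^n · binomial((p+2r−1)/2, n), where (p+2r−1)/2 is an integer since p is odd. -/
/-!
With `β = 4` the recurrence telescopes along even indices to
`c (2j) · 2^j j! = ∏_{i<j} (2i + 1 - 2r)`. For odd `p` put `m = (p + 2r - 1)/2`; then
`2m ≡ 2r - 1 (mod p)`, so `2i + 1 - 2r ≡ -2 (m - i)` and the product is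
`(-2)^j m(m-1)⋯(m-j+1) = (-2)^j j! C(m, j)` mod `p`. Dividing by `2^j j!`, a unit mod `p`
as long as `j < p`, gives `(-1)^j C(m, j)`.
-/

open Finset Nat

theorem prod_range_natCast_sub_eq_factorial_mul_choose {R : Type*} [CommRing R] (m j : ℕ) :
    ∏ i ∈ range j, ((m : R) - i) = (j ! * m.choose j : ℕ) := by
  rw [← descPochhammer_eval_eq_prod_range, descPochhammer_eval_eq_descFactorial,
    descFactorial_eq_factorial_mul_choose]

theorem prod_range_two_mul_add_one_sub {R : Type*} [CommRing R] {a : R} {m : ℕ}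
    (hm : 2 * (m : R) = a - 1) (j : ℕ) :
    ∏ i ∈ range j, (2 * (i : R) + 1 - a) = (-2) ^ j * (j ! * m.choose j : ℕ) := by
  have hfactor : ∀ i : ℕ, 2 * (i : R) + 1 - a = -2 * ((m : R) - i) := fun i => by
    linear_combination hm
  simp only [hfactor, prod_mul_distrib, prod_const, card_range,
    prod_range_natCast_sub_eq_factorial_mul_choose]

theorem mul_two_pow_mul_factorial_eq_prod {R : Type*} [CommRing R] {a : R} {c : ℕ → R}
    (h0 : c 0 = 1) (hrec : ∀ n : ℕ, ((n : R) + 2) * c (n + 2) = ((n : R) + 1 - a) * c n)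
    (j : ℕ) : c (2 * j) * (2 ^ j * j ! : ℕ) = ∏ i ∈ range j, (2 * (i : R) + 1 - a) := by
  induction j with
  | zero => simp [h0]
  | succ j ih =>
    have hstep := hrec (2 * j)
    rw [show 2 * (j + 1) = 2 * j + 2 by ring, prod_range_succ, ← ih]
    push_cast [factorial_succ, pow_succ] at hstep ⊢
    linear_combination (2 : R) ^ j * (j ! : R) * hstep

theorem ZMod.two_mul_natCast_half_add_two_mul_sub_one {p : ℕ} (hodd : Odd p) (r : ℕ) :
    2 * (((p + 2 * r - 1) / 2 : ℕ) : ZMod p) = 2 * r - 1 := by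
  obtain ⟨k, rfl⟩ := hodd
  rw [show (2 * k + 1 + 2 * r - 1) / 2 = k + r by omega]
  have hp : ((2 * k + 1 : ℕ) : ZMod (2 * k + 1)) = 0 := ZMod.natCast_self _
  push_cast at hp ⊢
  linear_combination hp

theorem Rat.cast_intCast_div_natCast_of_ne_zero {K : Type*} [DivisionRing K] (a : ℤ) {b : ℕ}
    (hb : (b : K) ≠ 0) : ((a / b : ℚ) : K) = a / b := by
  rw [← Rat.mkRat_eq_div, Rat.cast_mkRat_of_ne_zero a hb]

theorem ZMod.two_pow_mul_factorial_ne_zero {p : ℕ} [Fact p.Prime] (hodd : Odd p) {j : ℕ}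
    (hj : j < p) : ((2 ^ j * j ! : ℕ) : ZMod p) ≠ 0 := by
  have hp : p.Prime := Fact.out
  rw [Ne, ZMod.natCast_eq_zero_iff, hp.dvd_mul, not_or, hp.dvd_factorial, not_le]
  refine ⟨fun h2 => ?_, hj⟩
  have := Nat.le_of_dvd two_pos (hp.dvd_of_dvd_pow h2)
  have := hp.two_le
  obtain ⟨k, rfl⟩ := hodd
  omega

theorem stmt_2_general (r : ℕ) (β : ℚ) (c : ℕ → ℚ)
    (h0 : c 0 = 1)
    (hrec : ∀ n : ℕ,
      ((n : ℚ) + 2) * c (n + 2) = (β / 4) * ((n : ℚ) + 1 - 2 * r) * c n)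
    (hβ : β = 4)
    (n : ℕ) (p : ℕ) [Fact p.Prime] (hodd : Odd p)
    (hp2 : n < p) :
    ((c (2 * n) : ℚ) : ZMod p) =
      (-1) ^ n * (Nat.choose ((p + 2 * r - 1) / 2) n : ZMod p) := by
  subst hβ
  have hrec' : ∀ n : ℕ, ((n : ℚ) + 2) * c (n + 2) = ((n : ℚ) + 1 - 2 * r) * c n := by
    simpa using hrec
  have hD := ZMod.two_pow_mul_factorial_ne_zero hodd hp2
  have hclosed : c (2 * n) = ((∏ i ∈ range n, (2 * (i : ℤ) + 1 - 2 * r) : ℤ) : ℚ) /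
      ((2 ^ n * n ! : ℕ) : ℚ) := by
    rw [eq_div_iff (by positivity)]
    exact_mod_cast mul_two_pow_mul_factorial_eq_prod h0 hrec' n
  rw [hclosed, Rat.cast_intCast_div_natCast_of_ne_zero _ hD, div_eq_iff hD]
  push_cast
  rw [prod_range_two_mul_add_one_sub (ZMod.two_mul_natCast_half_add_two_mul_sub_one hodd r)]
  push_cast
  rw [neg_pow]
  ring

/-- Fix a positive integer `r` and a rational `β`. Define `c̃ : ℕ → ℚ` by
`c̃ 0 = 1`, `c̃ 1 = 0` and `(n+2)·c̃ (n+2) = (β/4)·(n+1−2r)·c̃ n` for all `n ≥ 0`.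
Suppose `β = 4`. Let `n ≥ 0` and let `p` be an odd prime with `p > 2r−1` and `p > n`.
Then the image of `c̃ (2n)` in `𝔽_p` (via the canonical map `ℚ → 𝔽_p`, well defined
on rationals with denominator prime to `p`) equals `(−1)^n · C((p+2r−1)/2, n)`. -/
theorem stmt_2 (r : ℕ) (hr : 1 ≤ r) (β : ℚ) (c : ℕ → ℚ)
    (h0 : c 0 = 1) (h1 : c 1 = 0)
    (hrec : ∀ n : ℕ,
      ((n : ℚ) + 2) * c (n + 2) = (β / 4) * ((n : ℚ) + 1 - 2 * r) * c n)
    (hβ : β = 4)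
    (n : ℕ) (p : ℕ) [Fact p.Prime] (hodd : Odd p)
    (hp1 : 2 * r - 1 < p) (hp2 : n < p) :
    ((c (2 * n) : ℚ) : ZMod p) =
      (-1) ^ n * (Nat.choose ((p + 2 * r - 1) / 2) n : ZMod p) :=
  stmt_2_general r β c h0 hrec hβ n p hodd hp2
end

section
/- In the polynomial ring ℚ[β] one has the identity c_{2r} = (1/(2^{2r}·(2r)!)) · ∏_{i=1}^{r} (1 − (2i−1)²·β). -/
/-!
Evaluating the recurrence at `β = 1 / (2i+1)²` with `i < r`, the sequence `c_n(β)` coincides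
with the coefficient sequence of `(1 + αt)^a (1 + δt)^b` for `α = (i+1)/(2i+1)`, `δ = i/(2i+1)`,
`a = r+i`, `b = r-1-i`: both satisfy the same second order recurrence, because this product
solves the first order ODE `(1 + t + αδ t²) g' = (r + (2r-1) αδ t) g` and `αδ = (1-β)/4`.
As `a + b = 2r-1`, the coefficient of `t^{2r}` vanishes, so these `r` points are roots of
`c_{2r}`. Since `c_n` has degree at most `n/2`, `c_{2r}` is determined by these roots and its
coefficient of `β^r`, which the recurrence computes directly.
-/

open Polynomial Finset

theorem mul_derivative_linear_pow {R : Type*} [CommRing R] (α : R) (a : ℕ) :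
    (1 + C α * X) * derivative ((1 + C α * X) ^ a) = C (a * α) * (1 + C α * X) ^ a := by
  induction a with
  | zero => simp
  | succ a ih =>
    have hℓ : derivative (1 + C α * X) = C α := by simp
    rw [pow_succ, derivative_mul, hℓ]
    simp only [map_mul, map_natCast, map_add, Nat.cast_succ, map_one] at ih ⊢
    linear_combination (1 + C α * X) * ih

theorem mul_derivative_linear_pow_mul_linear_pow {R : Type*} [CommRing R] (α δ : R) (a b : ℕ) :
    (1 + C (α + δ) * X + C (α * δ) * X ^ 2)
        * derivative ((1 + C α * X) ^ a * (1 + C δ * X) ^ b)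
      = (C (a * α + b * δ) + C ((a + b) * (α * δ)) * X)
        * ((1 + C α * X) ^ a * (1 + C δ * X) ^ b) := by
  have hα := mul_derivative_linear_pow α a
  have hδ := mul_derivative_linear_pow δ b
  rw [derivative_mul]
  simp only [map_mul, map_natCast, map_add] at hα hδ ⊢
  linear_combination
    (1 + C δ * X) * (1 + C δ * X) ^ b * hα + (1 + C α * X) * (1 + C α * X) ^ a * hδ

theorem coeff_add_two_of_mul_derivative_eq {R : Type*} [CommRing R] {g : R[X]} {σ π μ ν : R}
    (h : (1 + C σ * X + C π * X ^ 2) * derivative g = (C μ + C ν * X) * g) (n : ℕ) :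
    ((n : R) + 2) * g.coeff (n + 2) + ((n + 1) * σ - μ) * g.coeff (n + 1)
      + (n * π - ν) * g.coeff n = 0 := by
  have h := congrArg (coeff · (n + 1)) h
  simp only [add_mul, one_mul, mul_assoc, coeff_add, coeff_derivative, coeff_C_mul, coeff_X_mul,
    coeff_X_pow_mul'] at h
  rcases n with _ | n
  · simp only [if_neg (by norm_num : ¬ 2 ≤ 0 + 1)] at h
    push_cast at h ⊢
    linear_combination h
  · simp only [if_pos (by omega : 2 ≤ n + 1 + 1)] at h
    push_cast at h ⊢
    linear_combination h

theorem coeff_one_of_mul_derivative_eq {R : Type*} [CommRing R] {g : R[X]} {σ π μ ν : R}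
    (h : (1 + C σ * X + C π * X ^ 2) * derivative g = (C μ + C ν * X) * g) :
    g.coeff 1 = μ * g.coeff 0 := by
  simpa [add_mul, mul_assoc, coeff_derivative] using congrArg (coeff · 0) h

theorem eq_of_recurrence {K : Type*} [Field K] [CharZero K] {u v : ℕ → K} (A B : ℕ → K)
    (hu : ∀ n : ℕ, ((n : K) + 2) * u (n + 2) + A n * u (n + 1) + B n * u n = 0)
    (hv : ∀ n : ℕ, ((n : K) + 2) * v (n + 2) + A n * v (n + 1) + B n * v n = 0)
    (h0 : u 0 = v 0) (h1 : u 1 = v 1) : u = v := by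
  suffices h : ∀ n, u n = v n ∧ u (n + 1) = v (n + 1) from funext fun n => (h n).1
  intro n
  induction n with
  | zero => exact ⟨h0, h1⟩
  | succ n ih =>
    refine ⟨ih.2, mul_left_cancel₀ (by norm_cast : ((n : K) + 2) ≠ 0) ?_⟩
    linear_combination hu n - hv n - A n * ih.2 - B n * ih.1

theorem natDegree_prod_one_sub_C_mul_X_le {R ι : Type*} [CommRing R] (s : Finset ι)
    (a : ι → R) :
    (∏ i ∈ s, (1 - C (a i) * X)).natDegree ≤ #s := by
  rw [card_eq_sum_ones]
  exact (natDegree_prod_le _ _).trans (sum_le_sum fun i _ => by compute_degree)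

theorem coeff_prod_one_sub_C_mul_X_card {R ι : Type*} [CommRing R] (s : Finset ι) (a : ι → R) :
    (∏ i ∈ s, (1 - C (a i) * X)).coeff #s = ∏ i ∈ s, -a i := by
  have h := coeff_prod_of_natDegree_le (s := s) (fun i => 1 - C (a i) * X) 1
    fun i _ => by compute_degree
  rw [mul_one] at h
  rw [h]
  exact prod_congr rfl fun i _ => by simp [coeff_one]

theorem degree_sub_lt_of_coeff_eq {R : Type*} [Ring R] {p q : R[X]} {n : ℕ}
    (hp : p.natDegree ≤ n) (hq : q.natDegree ≤ n) (h : p.coeff n = q.coeff n) :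
    (p - q).degree < n := by
  refine (degree_lt_iff_coeff_zero _ _).2 fun m hm => ?_
  rcases hm.eq_or_lt with rfl | hm
  · simp [h]
  · simp [coeff_eq_zero_of_natDegree_lt (hp.trans_lt hm),
      coeff_eq_zero_of_natDegree_lt (hq.trans_lt hm)]

theorem two_pow_two_mul_mul_factorial (m : ℕ) :
    (2 ^ (2 * m) * (2 * m).factorial : ℚ)
      = (∏ i ∈ range m, 8 * ((i : ℚ) + 1)) * ∏ i ∈ range m, (2 * (i : ℚ) + 1) := by
  induction m with
  | zero => simp
  | succ m ih =>
    rw [prod_range_succ, prod_range_succ, mul_mul_mul_comm, ← ih,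
      show 2 * (m + 1) = 2 * m + 1 + 1 by ring, Nat.factorial_succ, Nat.factorial_succ]
    push_cast
    ring

theorem prod_range_odd_sub_div (r : ℕ) :
    ∏ i ∈ range r, (2 * (i : ℚ) + 1 - 2 * r) / (8 * (i + 1))
      = 1 / (2 ^ (2 * r) * (2 * r).factorial) * ∏ i ∈ range r, -(2 * (i : ℚ) + 1) ^ 2 := by
  have hreflect :
      ∏ i ∈ range r, (2 * (i : ℚ) + 1 - 2 * r) = ∏ i ∈ range r, -(2 * (i : ℚ) + 1) := by
    rw [← prod_range_reflect (fun i : ℕ => -(2 * (i : ℚ) + 1))]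
    refine prod_congr rfl fun i hi => ?_
    rw [mem_range] at hi
    rw [Nat.cast_sub (by omega), Nat.cast_sub (by omega)]
    push_cast
    ring
  have hsq : ∏ i ∈ range r, -(2 * (i : ℚ) + 1) ^ 2
      = (∏ i ∈ range r, -(2 * (i : ℚ) + 1)) * ∏ i ∈ range r, (2 * (i : ℚ) + 1) := by
    rw [← prod_mul_distrib]
    exact prod_congr rfl fun i _ => by ring
  have hodd : ∏ i ∈ range r, (2 * (i : ℚ) + 1) ≠ 0 :=
    prod_ne_zero_iff.2 fun i _ => by positivity
  have heven : ∏ i ∈ range r, 8 * ((i : ℚ) + 1) ≠ 0 :=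
    prod_ne_zero_iff.2 fun i _ => by positivity
  rw [prod_div_distrib, hreflect, two_pow_two_mul_mul_factorial, hsq]
  field_simp

theorem one_div_two_mul_add_one_sq_injective :
    Function.Injective fun i : ℕ => 1 / (2 * (i : ℚ) + 1) ^ 2 := by
  intro i j h
  have := (pow_left_inj₀ (a := 2 * (i : ℚ) + 1) (b := 2 * (j : ℚ) + 1) (by positivity)
    (by positivity) two_ne_zero).1 (inv_inj.1 (by simpa using h))
  exact_mod_cast (by linarith : (i : ℚ) = j)

def SatisfiesCRecurrence (ρ : ℚ) (c : ℕ → ℚ[X]) : Prop :=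
  ∀ n : ℕ, C ((n : ℚ) + 2) * c (n + 2) + C ((n : ℚ) + 1 - ρ) * c (n + 1)
    + C (((n : ℚ) + 1 - 2 * ρ) / 4) * (1 - X) * c n = 0

namespace SatisfiesCRecurrence

variable {ρ : ℚ} {c : ℕ → ℚ[X]}

theorem eval_eq_coeff (hrec : SatisfiesCRecurrence ρ c) (h0 : c 0 = 1) (h1 : c 1 = C ρ)
    {x α δ : ℚ} {a b : ℕ} (hsum : α + δ = 1) (hprod : α * δ = (1 - x) / 4)
    (hμ : a * α + b * δ = ρ) (hab : (a : ℚ) + b = 2 * ρ - 1) (n : ℕ) :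
    (c n).eval x = ((1 + C α * X) ^ a * (1 + C δ * X) ^ b).coeff n := by
  set g := (1 + C α * X) ^ a * (1 + C δ * X) ^ b
  have hode := mul_derivative_linear_pow_mul_linear_pow α δ a b
  rw [hsum, hμ] at hode
  refine congrFun (eq_of_recurrence (u := fun n => (c n).eval x) (v := g.coeff)
    (fun n => n + 1 - ρ) (fun n => (n + 1 - 2 * ρ) / 4 * (1 - x))
    (fun n => ?_) (fun n => ?_) ?_ ?_) n
  · have h := congrArg (eval x) (hrec n)
    simp only [eval_add, eval_mul, eval_C, eval_sub, eval_one, eval_X, eval_zero] at h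
    linear_combination h
  · linear_combination coeff_add_two_of_mul_derivative_eq hode n
      - (n + 1 - 2 * ρ) * g.coeff n * hprod + α * δ * g.coeff n * hab
  · simp [g, h0, coeff_zero_eq_eval_zero]
  · simp [h1, coeff_one_of_mul_derivative_eq hode, g, coeff_zero_eq_eval_zero]

theorem natDegree_le (hrec : SatisfiesCRecurrence ρ c) (h0 : c 0 = 1) (h1 : c 1 = C ρ) :
    ∀ n, (c n).natDegree ≤ n / 2
  | 0 => by simp [h0]
  | 1 => by simp [h1]
  | n + 2 => by
    have hc : C ((n : ℚ) + 2) * c (n + 2)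
        = -(C ((n : ℚ) + 1 - ρ) * c (n + 1)
            + C (((n : ℚ) + 1 - 2 * ρ) / 4) * (1 - X) * c n) := by
      linear_combination hrec n
    have h₁ : (C ((n : ℚ) + 1 - ρ) * c (n + 1)).natDegree ≤ (n + 1) / 2 :=
      (natDegree_C_mul_le _ _).trans (hrec.natDegree_le h0 h1 (n + 1))
    have h₀ : (C (((n : ℚ) + 1 - 2 * ρ) / 4) * (1 - X) * c n).natDegree ≤ 1 + n / 2 :=
      natDegree_mul_le.trans (add_le_add (by compute_degree) (hrec.natDegree_le h0 h1 n))
    rw [← natDegree_C_mul (a := (n : ℚ) + 2) (by positivity), hc, natDegree_neg]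
    exact (natDegree_add_le _ _).trans (max_le (by omega) (by omega))

theorem coeff_two_mul (hrec : SatisfiesCRecurrence ρ c) (h0 : c 0 = 1) (h1 : c 1 = C ρ)
    (m : ℕ) :
    (c (2 * m)).coeff m = ∏ i ∈ range m, (2 * (i : ℚ) + 1 - 2 * ρ) / (8 * (i + 1)) := by
  induction m with
  | zero => simp [h0]
  | succ m ih =>
    have hdeg := hrec.natDegree_le h0 h1
    have hodd : (c (2 * m + 1)).coeff (m + 1) = 0 :=
      coeff_eq_zero_of_natDegree_lt ((hdeg _).trans_lt (by omega))
    have heven : (c (2 * m)).coeff (m + 1) = 0 :=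
      coeff_eq_zero_of_natDegree_lt ((hdeg _).trans_lt (by omega))
    have h := congrArg (coeff · (m + 1)) (hrec (2 * m))
    simp only [mul_assoc, coeff_add, coeff_C_mul, sub_mul, one_mul, coeff_sub, coeff_X_mul,
      coeff_zero, hodd, heven, ih] at h
    rw [prod_range_succ, show 2 * (m + 1) = 2 * m + 2 by ring]
    field_simp
    push_cast at h ⊢
    linear_combination 4 * h

theorem eval_two_mul_eq_zero {r : ℕ} (hrec : SatisfiesCRecurrence r c) (h0 : c 0 = 1)
    (h1 : c 1 = C (r : ℚ)) {i : ℕ} (hi : i < r) :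
    (c (2 * r)).eval (1 / (2 * (i : ℚ) + 1) ^ 2) = 0 := by
  obtain ⟨b, rfl⟩ : ∃ b, r = i + 1 + b := ⟨r - (i + 1), by omega⟩
  rw [hrec.eval_eq_coeff h0 h1 (α := (i + 1) / (2 * i + 1)) (δ := i / (2 * i + 1))
    (a := 2 * i + 1 + b) (b := b) (by field_simp; ring) (by field_simp; ring)
    (by push_cast; field_simp; ring) (by push_cast; ring)]
  exact coeff_eq_zero_of_natDegree_lt
    ((show _ ≤ (2 * i + 1 + b) + b by compute_degree).trans_lt (by omega))

end SatisfiesCRecurrence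

open Polynomial in
theorem stmt_5_general (r : ℕ) (c : ℕ → Polynomial ℚ)
    (h0 : c 0 = 1) (h1 : c 1 = C (r : ℚ))
    (hrec : ∀ n : ℕ,
      C ((n : ℚ) + 2) * c (n + 2) + C ((n : ℚ) + 1 - r) * c (n + 1)
        + C (((n : ℚ) + 1 - 2 * r) / 4) * (1 - X) * c n = 0) :
    c (2 * r) = C (1 / (2 ^ (2 * r) * (Nat.factorial (2 * r) : ℚ))) *
      ∏ i ∈ Finset.range r, (1 - C ((2 * (i : ℚ) + 1) ^ 2) * X) := by
  have hrec : SatisfiesCRecurrence r c := hrec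
  refine eq_of_degree_sub_lt_of_eval_index_eq (range r)
    one_div_two_mul_add_one_sq_injective.injOn ?_ fun i hi => ?_
  · have hdeg : (c (2 * r)).natDegree ≤ r := by simpa using hrec.natDegree_le h0 h1 (2 * r)
    have hP := natDegree_prod_one_sub_C_mul_X_le (range r) fun i => (2 * (i : ℚ) + 1) ^ 2
    rw [card_range] at hP ⊢
    refine degree_sub_lt_of_coeff_eq hdeg ((natDegree_C_mul_le _ _).trans hP) ?_
    have hcoeff := coeff_prod_one_sub_C_mul_X_card (range r) fun i => (2 * (i : ℚ) + 1) ^ 2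
    rw [card_range] at hcoeff
    rw [hrec.coeff_two_mul h0 h1, coeff_C_mul, hcoeff, prod_range_odd_sub_div]
  · have hs : 2 * (i : ℚ) + 1 ≠ 0 := by positivity
    rw [hrec.eval_two_mul_eq_zero h0 h1 (mem_range.1 hi), eval_mul, eval_prod,
      prod_eq_zero hi (by simp [hs]), mul_zero]

open Polynomial in
/-- Fix a positive integer `r`. Define `c : ℕ → ℚ[β]` by `c 0 = 1`, `c 1 = r` and
`(n+2)·c (n+2) + (n+1−r)·c (n+1) + (n+1−2r)·((1−β)/4)·c n = 0` for all `n ≥ 0`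
(this is the sequence `c_n(1,β,0)` of the paper). Then
`c (2r) = (1/(2^{2r}·(2r)!)) · ∏_{i=1}^{r} (1 − (2i−1)²·β)` in `ℚ[β]`. -/
theorem stmt_5 (r : ℕ) (hr : 1 ≤ r) (c : ℕ → Polynomial ℚ)
    (h0 : c 0 = 1) (h1 : c 1 = C (r : ℚ))
    (hrec : ∀ n : ℕ,
      C ((n : ℚ) + 2) * c (n + 2) + C ((n : ℚ) + 1 - r) * c (n + 1)
        + C (((n : ℚ) + 1 - 2 * r) / 4) * (1 - X) * c n = 0) :
    c (2 * r) = C (1 / (2 ^ (2 * r) * (Nat.factorial (2 * r) : ℚ))) *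
      ∏ i ∈ Finset.range r, (1 - C ((2 * (i : ℚ) + 1) ^ 2) * X) :=
  stmt_5_general r c h0 h1 hrec
end

section
/- There exists a nonzero rational constant c such that, in ℚ[β], P_k(1,β,0) = c · ∏_{i=1}^{r} (β − 1/(2i−1)²)^k · ∏_{i=1}^{k−1} (β − 1/(2r+2i−1)²)^{k−i}. -/
/-!
Evaluating at `β = (1 + 2a)²`, the recurrence for `c_n` becomes the coefficient recurrence of a
power series `F` with `(1 - a t) (1 + (1 + a) t) F' = (r - a (1 + a) (2r - 1) t) F`, solved by
`F = (1 - a t) ^ A (1 + (1 + a) t) ^ B` with `A + B = 2r - 1` and `(1 + a) B - a A = r`.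
At `β = 1 / (2t + 1)²` this gives `B = r + t` and `A = r - 1 - t`. For `t < r`, `F` is a
polynomial of degree `2r - 1`, so every entry `c_{k+2r-1+j-i}` of the matrix of `P_k` vanishes
there. For `t ≥ r`, `(1 - a t) ^ (t + 1 - r) F` is a polynomial of degree `r + t`, and column
operations multiplying by this factor make `k + r - 1 - t` columns of the matrix vanish. Since `deg c_n ≤ n / 2`, these
roots exhaust the degree of `P_k`. Finally `P_k ≠ 0`: at `t = r + k - 1` row and column
operations make the matrix triangular with diagonal entries `(1 + 2a) ^ (k + 2r - 1)`.
-/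

open Polynomial Finset

theorem sum_range_ite_le {M : Type*} [AddCommMonoid M] (g : ℕ → M) {i k : ℕ} (h : i ≤ k) :
    ∑ p ∈ range k, (if i ≤ p then g (p - i) else 0) = ∑ d ∈ range (k - i), g d := by
  conv_lhs => rw [← Nat.add_sub_cancel' h, sum_range_add]
  rw [sum_eq_zero fun p hp => if_neg (by simpa using hp), zero_add]
  exact sum_congr rfl fun d _ => by rw [if_pos (by omega), Nat.add_sub_cancel_left]

theorem sum_range_sub_mul_two (n : ℕ) : (∑ i ∈ range n, (n - i)) * 2 = (n + 1) * n := by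
  induction n with
  | zero => simp
  | succ n ih =>
    rw [sum_range_succ, sum_congr rfl fun i hi => Nat.sub_add_comm (mem_range.mp hi).le,
      sum_add_distrib, sum_const, card_range, smul_eq_mul, mul_one, Nat.add_sub_cancel_left]
    linear_combination ih

theorem Fin.card_filter_le_val (k i : ℕ) : #{j : Fin k | i ≤ (j : ℕ)} = k - i := by
  have := card_filter_add_card_filter_not (s := univ) (fun j : Fin k => (j : ℕ) < i)
  simp only [not_lt, Fin.card_filter_val_lt, card_univ, Fintype.card_fin] at this
  omega

section MulOneSub

variable {R : Type*} [CommRing R]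

/-- The coefficients of `(1 - a t) * ∑ v n * t ^ n`. -/
def mulOneSub (a : R) (v : ℕ → R) : ℕ → R
  | 0 => v 0
  | n + 1 => v (n + 1) - a * v n

@[simp]
theorem mulOneSub_zero (a : R) (v : ℕ → R) : mulOneSub a v 0 = v 0 := rfl

@[simp]
theorem mulOneSub_succ (a : R) (v : ℕ → R) (n : ℕ) :
    mulOneSub a v (n + 1) = v (n + 1) - a * v n := rfl

@[simp]
theorem mulOneSub_iterate_zero (a : R) (v : ℕ → R) (t : ℕ) : (mulOneSub a)^[t] v 0 = v 0 := by
  induction t with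
  | zero => rfl
  | succ t ih => rw [Function.iterate_succ_apply', mulOneSub_zero, ih]

theorem mulOneSub_iterate_eq_zero {a : R} {v : ℕ → R} {B : ℕ} (hv : ∀ n, B < n → v n = 0)
    (t : ℕ) : ∀ n, B + t < n → (mulOneSub a)^[t] v n = 0 := by
  induction t with
  | zero => simpa using hv
  | succ t ih =>
    rintro (_ | n) hn
    · omega
    · rw [Function.iterate_succ_apply', mulOneSub_succ, ih _ (by omega), ih _ (by omega),
        mul_zero, sub_zero]

theorem mulOneSub_iterate_apply (a : R) (v : ℕ → R) (t : ℕ) :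
    ∀ n, t ≤ n →
      (mulOneSub a)^[t] v n = ∑ d ∈ range (t + 1), (t.choose d : R) * (-a) ^ d * v (n - d) := by
  induction t with
  | zero => simp
  | succ t ih =>
    rintro (_ | n) hn
    · omega
    · have := sum_choose_succ_mul (fun d _ => (-a) ^ d * v (n + 1 - d)) t
      simp only [← mul_assoc] at this
      rw [Function.iterate_succ_apply', mulOneSub_succ, ih _ (by omega), ih _ (by omega), this,
        sub_eq_add_neg, mul_sum, ← sum_neg_distrib]
      congr 1
      refine sum_congr rfl fun d _ => ?_
      rw [Nat.add_sub_add_right]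
      ring

theorem eq_sum_pow_mul_mulOneSub (a : R) (v : ℕ → R) (n : ℕ) :
    v n = ∑ m ∈ range (n + 1), a ^ (n - m) * mulOneSub a v m := by
  induction n with
  | zero => simp
  | succ n ih =>
    rw [sum_range_succ, Nat.sub_self, pow_zero, one_mul, mulOneSub_succ, ih, mul_sum]
    have : ∀ m ∈ range (n + 1), a ^ (n + 1 - m) * mulOneSub a v m
        = a * (a ^ (n - m) * mulOneSub a v m) := fun m hm => by
      rw [Nat.sub_add_comm (Nat.lt_succ_iff.mp (mem_range.mp hm)), pow_succ]; ring
    rw [sum_congr rfl this]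
    ring

theorem map_mulOneSub_iterate {S : Type*} [CommRing S] (f : R →+* S) (a : R) (v : ℕ → R)
    (t n : ℕ) : f ((mulOneSub a)^[t] v n) = (mulOneSub (f a))^[t] (f ∘ v) n := by
  induction t generalizing n with
  | zero => rfl
  | succ t ih =>
    rw [Function.iterate_succ_apply', Function.iterate_succ_apply']
    cases n with
    | zero => simp
    | succ n => simp [ih]

end MulOneSub

section CoeffRec

variable {R : Type*} [CommRing R]

/-- `v` is the coefficient sequence of a power series `F` solving
`(1 + t + lam t²) F' = (ρ + lam σ t) F`. For `lam = -a (1 + a)` the left factor is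
`(1 - a t) (1 + (1 + a) t)`, and the solutions are the multiples of
`(1 - a t) ^ A * (1 + (1 + a) t) ^ B` with `ρ = (1 + a) B - a A` and `σ = A + B`. -/
def IsCoeffRec (lam ρ σ : R) (v : ℕ → R) : Prop :=
  v 1 = ρ * v 0 ∧ ∀ n : ℕ,
    ((n : R) + 2) * v (n + 2) + ((n : R) + 1 - ρ) * v (n + 1) + lam * ((n : R) - σ) * v n = 0

theorem IsCoeffRec.map {S : Type*} [CommRing S] {lam ρ σ : R} {v : ℕ → R}
    (hv : IsCoeffRec lam ρ σ v) (f : R →+* S) : IsCoeffRec (f lam) (f ρ) (f σ) (f ∘ v) := by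
  refine ⟨by simp [hv.1], fun n => ?_⟩
  simpa [map_ofNat] using congrArg f (hv.2 n)

theorem IsCoeffRec.mulOneSub {a ρ σ : R} {v : ℕ → R}
    (hv : IsCoeffRec (-(a * (1 + a))) ρ σ v) :
    IsCoeffRec (-(a * (1 + a))) (ρ - a) (σ + 1) (mulOneSub a v) := by
  refine ⟨by simp [hv.1]; ring, ?_⟩
  rintro (_ | n)
  · simp only [mulOneSub_succ, mulOneSub_zero]
    push_cast
    linear_combination hv.2 0 - a * hv.1
  · have h := hv.2 (n + 1)
    simp only [mulOneSub_succ]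
    push_cast at h ⊢
    linear_combination h - a * hv.2 n

theorem IsCoeffRec.mulOneSub_iterate {a ρ σ : R} {v : ℕ → R}
    (hv : IsCoeffRec (-(a * (1 + a))) ρ σ v) (t : ℕ) :
    IsCoeffRec (-(a * (1 + a))) (ρ - t * a) (σ + t) ((_root_.mulOneSub a)^[t] v) := by
  induction t with
  | zero => simpa using hv
  | succ t ih =>
    rw [Function.iterate_succ_apply']
    convert ih.mulOneSub using 1 <;> push_cast <;> ring

def binomSeq (a : R) (B : ℕ) (n : ℕ) : R := B.choose n * (1 + a) ^ n

theorem binomSeq_eq_zero {a : R} {B n : ℕ} (h : B < n) : binomSeq a B n = 0 := by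
  simp [binomSeq, Nat.choose_eq_zero_of_lt h]

theorem binomSeq_succ (a : R) (B n : ℕ) :
    ((n : R) + 1) * binomSeq a B (n + 1) = (1 + a) * ((B : R) - n) * binomSeq a B n := by
  rcases lt_or_ge n B with h | h
  · have := congrArg (Nat.cast : ℕ → R) (Nat.choose_succ_right_eq B n)
    push_cast [Nat.cast_sub h.le] at this
    simp only [binomSeq, pow_succ]
    linear_combination (1 + a) ^ n * (1 + a) * this
  · rw [binomSeq_eq_zero (by omega)]
    rcases h.lt_or_eq with h | rfl
    · rw [binomSeq_eq_zero h]; ring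
    · ring

theorem isCoeffRec_binomSeq (a : R) (B : ℕ) :
    IsCoeffRec (-(a * (1 + a))) ((1 + a) * B) B (binomSeq a B) := by
  refine ⟨by simp [binomSeq]; ring, fun n => ?_⟩
  have h1 := binomSeq_succ a B (n + 1)
  have h2 := binomSeq_succ a B n
  push_cast at h1 ⊢
  linear_combination h1 - a * h2

variable {K : Type*} [Field K] [CharZero K]

theorem IsCoeffRec.ext {lam ρ σ : K} {v w : ℕ → K} (hv : IsCoeffRec lam ρ σ v)
    (hw : IsCoeffRec lam ρ σ w) (h0 : v 0 = w 0) : v = w := by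
  have key : ∀ n, v n = w n ∧ v (n + 1) = w (n + 1) := by
    intro n
    induction n with
    | zero => exact ⟨h0, by rw [hv.1, hw.1, h0]⟩
    | succ n ih =>
      refine ⟨ih.2, mul_left_cancel₀ (by norm_cast : (n : K) + 2 ≠ 0) ?_⟩
      linear_combination hv.2 n - hw.2 n - ((n : K) + 1 - ρ) * ih.2 - lam * ((n : K) - σ) * ih.1
  exact funext fun n => (key n).1

theorem IsCoeffRec.eq_zero_of_lt {a ρ σ : K} {A B : ℕ} {u : ℕ → K}
    (hu : IsCoeffRec (-(a * (1 + a))) ρ σ u) (hu0 : u 0 = 1)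
    (hρ : (1 + a) * B - A * a = ρ) (hσ : (B : K) + A = σ) {n : ℕ} (hn : B + A < n) :
    u n = 0 := by
  have hbin := (isCoeffRec_binomSeq a B).mulOneSub_iterate A
  rw [hρ, hσ] at hbin
  rw [hu.ext hbin (by simp [hu0, binomSeq])]
  exact mulOneSub_iterate_eq_zero (fun _ => binomSeq_eq_zero) A n hn

theorem IsCoeffRec.mulOneSub_iterate_eq_binomSeq {a ρ σ : K} {B t : ℕ} {u : ℕ → K}
    (hu : IsCoeffRec (-(a * (1 + a))) ρ σ u) (hu0 : u 0 = 1)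
    (hρ : ρ - t * a = (1 + a) * B) (hσ : σ + t = B) :
    (_root_.mulOneSub a)^[t] u = binomSeq a B := by
  have h := hu.mulOneSub_iterate t
  rw [hρ, hσ] at h
  exact h.ext (isCoeffRec_binomSeq a B) (by simp [hu0, binomSeq])

end CoeffRec

section Determinant

variable {R : Type*} [CommRing R]

theorem pow_card_dvd_det {n : Type*} [Fintype n] [DecidableEq n] (M : Matrix n n R) (p : R)
    (s : Finset n) (h : ∀ j ∈ s, ∀ i, p ∣ M i j) : p ^ s.card ∣ M.det := by
  choose! M' hM' using h
  let N : Matrix n n R := .of fun i j => if j ∈ s then M' j i else M i j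
  have hM : M = .of fun i j => (if j ∈ s then p else 1) * N i j := by
    ext i j
    simp only [N, Matrix.of_apply]
    split_ifs with hj
    · exact hM' j hj i
    · rw [one_mul]
  rw [hM, Matrix.det_mul_row, prod_ite_mem, univ_inter, prod_const]
  exact dvd_mul_right _ _

variable {k : ℕ} (a : R) (N : ℕ)

/-- Applying `(mulOneSub a)^[m ℓ]` in row `ℓ` adds to it multiples of the rows below it. -/
theorem det_toeplitz_mulOneSub_iterate_row (hN : k ≤ N + 1) (V : Fin k → ℕ → R)
    (m : Fin k → ℕ) (hm : ∀ ℓ : Fin k, ℓ + m ℓ < k) :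
    (Matrix.of fun ℓ j : Fin k => (mulOneSub a)^[m ℓ] (V j) (N + j - ℓ)).det =
      (Matrix.of fun ℓ j : Fin k => V j (N + j - ℓ)).det := by
  let L : Matrix (Fin k) (Fin k) R := .of fun ℓ p =>
    if (ℓ : ℕ) ≤ p then ((m ℓ).choose (p - ℓ) : R) * (-a) ^ (p - ℓ : ℕ) else 0
  have hLtri : L.IsUpperTriangular := fun ℓ p (h : p < ℓ) => if_neg (by simpa using h)
  have hL : L.det = 1 := by
    rw [Matrix.det_of_isUpperTriangular hLtri]
    simp [L]
  suffices hLM : (Matrix.of fun ℓ j : Fin k => (mulOneSub a)^[m ℓ] (V j) (N + j - ℓ)) =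
      L * Matrix.of fun ℓ j : Fin k => V j (N + j - ℓ) by
    rw [hLM, Matrix.det_mul, hL, one_mul]
  ext ℓ j
  have hℓ := hm ℓ
  set g : ℕ → R := fun d => ((m ℓ).choose d : R) * (-a) ^ d * V j (N + j - ℓ - d)
  calc (mulOneSub a)^[m ℓ] (V j) (N + j - ℓ) = ∑ d ∈ range (m ℓ + 1), g d :=
        mulOneSub_iterate_apply _ _ _ _ (by omega)
    _ = ∑ d ∈ range (k - ℓ), g d := sum_subset (by intro d; simp; omega) fun d _ hd => by
        simp [g, Nat.choose_eq_zero_of_lt (by simpa using hd : m ℓ < d)]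
    _ = ∑ p ∈ range k, if (ℓ : ℕ) ≤ p then g (p - ℓ) else 0 :=
        (sum_range_ite_le g ℓ.is_lt.le).symm
    _ = _ := by
      rw [← Fin.sum_univ_eq_sum_range]
      refine sum_congr rfl fun p _ => ?_
      simp only [L, g, Matrix.of_apply]
      split_ifs with h
      · rw [Nat.sub_sub, Nat.add_sub_cancel' h]
      · rw [zero_mul]

/-- Reflection in the antidiagonal, which fixes `N + j - ℓ`. -/
theorem det_toeplitz_rev (W : Fin k → Fin k → ℕ → R) :
    (Matrix.of fun ℓ j : Fin k => W ℓ j (N + j - ℓ)).det =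
      (Matrix.of fun ℓ j : Fin k => W j.rev ℓ.rev (N + j - ℓ)).det := by
  rw [← Matrix.det_transpose, ← Matrix.det_submatrix_equiv_self Fin.revPerm]
  congr 1
  ext ℓ j
  simp only [Matrix.submatrix_apply, Matrix.transpose_apply, Matrix.of_apply, Fin.revPerm_apply,
    Fin.val_rev]
  congr 1
  omega

theorem det_toeplitz_mulOneSub_iterate_col (hN : k ≤ N + 1) (v : ℕ → R) (m : Fin k → ℕ)
    (hm : ∀ j : Fin k, m j ≤ j) :
    (Matrix.of fun ℓ j : Fin k => (mulOneSub a)^[m j] v (N + j - ℓ)).det =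
      (Matrix.of fun ℓ j : Fin k => v (N + j - ℓ)).det :=
  (det_toeplitz_rev N fun _ j => (mulOneSub a)^[m j] v).trans <|
    (det_toeplitz_mulOneSub_iterate_row a N hN (fun _ => v) (fun ℓ => m ℓ.rev) fun ℓ => by
      have := hm ℓ.rev; rw [Fin.val_rev] at this; omega).trans
    (det_toeplitz_rev N fun _ _ => v).symm

/-- After the column operations `(mulOneSub a)^[j]` and the row operations
`(mulOneSub a)^[k - 1 - ℓ]`, the entry `(ℓ, j)` is the coefficient of `t ^ (N + j - ℓ)` in
`(1 - a t) ^ (k - 1 - ℓ + j) U`, which vanishes above the diagonal. -/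
theorem det_toeplitz_eq_pow (hN : k ≤ N + 1) (u : ℕ → R)
    (hu : ∀ n, N < n → (mulOneSub a)^[k] u n = 0) :
    (Matrix.of fun ℓ j : Fin k => u (N + j - ℓ)).det = (mulOneSub a)^[k - 1] u N ^ k := by
  rw [← det_toeplitz_mulOneSub_iterate_col a N hN u (fun j => j) fun _ => le_rfl,
    ← det_toeplitz_mulOneSub_iterate_row a N hN (fun j => (mulOneSub a)^[j] u)
      (fun ℓ => k - 1 - ℓ) fun ℓ => by omega]
  have hlow : (Matrix.of fun ℓ j : Fin k =>
      (mulOneSub a)^[k - 1 - ℓ] ((mulOneSub a)^[j] u) (N + j - ℓ)).IsLowerTriangular := by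
    intro ℓ j (h : ℓ < j)
    rw [Matrix.of_apply, ← Function.iterate_add_apply,
      show k - 1 - ℓ + j = (j - ℓ - 1) + k by omega, Function.iterate_add_apply]
    exact mulOneSub_iterate_eq_zero hu _ _ (by omega)
  rw [Matrix.det_of_isLowerTriangular _ hlow]
  calc ∏ ℓ : Fin k, (Matrix.of fun ℓ j : Fin k =>
        (mulOneSub a)^[k - 1 - ℓ] ((mulOneSub a)^[j] u) (N + j - ℓ)) ℓ ℓ
      = ∏ _ℓ : Fin k, (mulOneSub a)^[k - 1] u N := prod_congr rfl fun ℓ _ => by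
        rw [Matrix.of_apply, ← Function.iterate_add_apply, Nat.sub_add_cancel (by omega),
          Nat.add_sub_cancel]
    _ = _ := by rw [prod_const, card_univ, Fintype.card_fin]

theorem det_toeplitz_eq_of_mulOneSub_iterate_eq_binomSeq (hN : k ≤ N + 1) (u : ℕ → R)
    (hu : (mulOneSub a)^[k] u = binomSeq a N) :
    (Matrix.of fun ℓ j : Fin k => u (N + j - ℓ)).det = (1 + 2 * a) ^ (k * N) := by
  rcases k with _ | k
  · simp
  have hdiag : (mulOneSub a)^[k] u N = (1 + 2 * a) ^ N := by
    rw [eq_sum_pow_mul_mulOneSub a ((mulOneSub a)^[k] u) N,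
      ← Function.iterate_succ_apply' (mulOneSub a), hu,
      show (1 : R) + 2 * a = (1 + a) + a by ring, add_pow]
    exact sum_congr rfl fun m _ => by rw [binomSeq]; ring
  rw [det_toeplitz_eq_pow a N hN u fun n hn => hu ▸ binomSeq_eq_zero hn, Nat.add_sub_cancel, hdiag,
    ← pow_mul, mul_comm N]

end Determinant

section Degree

theorem IsCoeffRec.two_mul_natDegree_le {K : Type*} [Field K] [CharZero K] {lam : K[X]}
    {ρ σ : K} {v : ℕ → K[X]} (hv : IsCoeffRec lam (C ρ) (C σ) v)
    (hlam : lam.natDegree ≤ 1) (h0 : (v 0).natDegree = 0) (n : ℕ) :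
    2 * (v n).natDegree ≤ n := by
  suffices ∀ n, 2 * (v n).natDegree ≤ n ∧ 2 * (v (n + 1)).natDegree ≤ n + 1 from (this n).1
  intro n
  induction n with
  | zero =>
    have := natDegree_C_mul_le ρ (v 0)
    rw [h0] at this
    rw [zero_add, hv.1, h0]
    omega
  | succ n ih =>
    refine ⟨ih.2, ?_⟩
    have e : C ((n : K) + 2) * v (n + 2) =
        -(C ((n : K) + 1 - ρ) * v (n + 1) + lam * C ((n : K) - σ) * v n) := by
      simp only [map_add, map_sub, map_natCast, map_ofNat, map_one]
      linear_combination hv.2 n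
    have hdeg := congrArg natDegree e
    rw [natDegree_C_mul (by norm_cast), natDegree_neg] at hdeg
    have h1 := natDegree_C_mul_le ((n : K) + 1 - ρ) (v (n + 1))
    have h2 : (lam * C ((n : K) - σ) * v n).natDegree ≤ 1 + (v n).natDegree :=
      natDegree_mul_le_of_le (natDegree_mul_le_of_le hlam (natDegree_C _).le) le_rfl
    have := natDegree_add_le (C ((n : K) + 1 - ρ) * v (n + 1)) (lam * C ((n : K) - σ) * v n)
    show 2 * (v (n + 2)).natDegree ≤ n + 2
    omega

theorem two_mul_natDegree_det_toeplitz_le {R : Type*} [CommRing R] {k : ℕ} (N : ℕ)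
    (hN : k ≤ N + 1) {c : ℕ → R[X]} (hc : ∀ n, 2 * (c n).natDegree ≤ n) :
    2 * (Matrix.of fun ℓ j : Fin k => c (N + j - ℓ)).det.natDegree ≤ k * N := by
  suffices h : (Matrix.of fun ℓ j : Fin k => c (N + j - ℓ)).det.natDegree ≤ k * N / 2 by
    have := Nat.mul_div_le (k * N) 2
    omega
  rw [Matrix.det_apply]
  refine natDegree_sum_le_of_forall_le _ _ fun τ _ => (Nat.le_div_iff_mul_le two_pos).mpr ?_
  have hsum : ∑ i : Fin k, (N + i - τ i) = k * N := by
    zify [fun i : Fin k => (by omega : (τ i : ℕ) ≤ N + i)]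
    rw [sum_sub_distrib, sum_add_distrib, Equiv.sum_comp τ (fun i : Fin k => (i : ℤ))]
    simp
  calc _ ≤ (∏ i, c (N + i - τ i)).natDegree * 2 := by
        gcongr
        exact natDegree_smul_le _ _
    _ ≤ (∑ i, (c (N + i - τ i)).natDegree) * 2 := by
        gcongr
        exact natDegree_prod_le _ _
    _ ≤ k * N := by
        rw [← hsum, sum_mul]
        exact sum_le_sum fun i _ => by rw [mul_comm]; exact hc _

end Degree

section Roots

theorem isCoeffRec_of_rec {K : Type*} [Field K] {ρ : K} {c : ℕ → K[X]} (h0 : c 0 = 1)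
    (h1 : c 1 = C ρ)
    (hrec : ∀ n : ℕ, C ((n : K) + 2) * c (n + 2) + C ((n : K) + 1 - ρ) * c (n + 1)
      + C (((n : K) + 1 - 2 * ρ) / 4) * (1 - X) * c n = 0) :
    IsCoeffRec (C (1 / 4) * (1 - X)) (C ρ) (C (2 * ρ - 1)) c := by
  refine ⟨by rw [h1, h0, mul_one], fun n => ?_⟩
  rw [← hrec n, show ((n : K) + 1 - 2 * ρ) / 4 = 1 / 4 * ((n : K) - (2 * ρ - 1)) by ring]
  simp only [map_add, map_sub, map_mul, map_natCast, map_ofNat, map_one]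
  ring

theorem IsCoeffRec.eval_sq {K : Type*} [Field K] [CharZero K] {ρ σ : K} {c : ℕ → K[X]}
    (hc : IsCoeffRec (C (1 / 4) * (1 - X)) (C ρ) (C σ) c) (a : K) :
    IsCoeffRec (-(a * (1 + a))) ρ σ fun n => (c n).eval ((1 + 2 * a) ^ 2) := by
  have h := hc.map (evalRingHom ((1 + 2 * a) ^ 2))
  simp only [map_mul, map_sub, map_one, coe_evalRingHom, eval_C, eval_X] at h
  convert h using 1
  · ring
  · rfl

def rootParam (t : ℕ) : ℚ := -t / (2 * t + 1)

theorem one_add_two_mul_rootParam (t : ℕ) : 1 + 2 * rootParam t = (2 * (t : ℚ) + 1)⁻¹ := by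
  rw [rootParam]
  field_simp
  ring

theorem sq_one_add_two_mul_rootParam (t : ℕ) :
    (1 + 2 * rootParam t) ^ 2 = 1 / (2 * (t : ℚ) + 1) ^ 2 := by
  rw [one_add_two_mul_rootParam, inv_pow, one_div]

theorem two_mul_add_one_mul_rootParam (t : ℕ) : (2 * (t : ℚ) + 1) * rootParam t = -t := by
  rw [rootParam]
  field_simp

variable {r : ℕ} {c : ℕ → ℚ[X]}

theorem IsCoeffRec.eval_root_eq_zero
    (hc : IsCoeffRec (C (1 / 4) * (1 - X)) (C (r : ℚ)) (C (2 * r - 1)) c) (h0 : c 0 = 1)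
    {t n : ℕ} (ht : t < r) (hn : 2 * r - 1 < n) :
    (c n).eval (1 / (2 * (t : ℚ) + 1) ^ 2) = 0 := by
  rw [← sq_one_add_two_mul_rootParam]
  have hA : ((r - 1 - t : ℕ) : ℚ) = r - 1 - t := by
    rw [Nat.sub_sub, Nat.cast_sub (by omega)]
    push_cast
    ring
  refine (hc.eval_sq _).eq_zero_of_lt (A := r - 1 - t) (B := r + t) (by simp [h0]) ?_ ?_
    (by omega)
  · push_cast [hA]
    linear_combination two_mul_add_one_mul_rootParam t
  · push_cast [hA]
    ring

theorem IsCoeffRec.mulOneSub_iterate_eval_root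
    (hc : IsCoeffRec (C (1 / 4) * (1 - X)) (C (r : ℚ)) (C (2 * r - 1)) c) (h0 : c 0 = 1) {t : ℕ}
    (ht : r ≤ t + 1) :
    (_root_.mulOneSub (rootParam t))^[t + 1 - r]
        (fun n => (c n).eval (1 / (2 * (t : ℚ) + 1) ^ 2)) =
      binomSeq (rootParam t) (r + t) := by
  simp only [← sq_one_add_two_mul_rootParam]
  refine (hc.eval_sq _).mulOneSub_iterate_eq_binomSeq (by simp [h0]) ?_ ?_
  · push_cast [ht]
    linear_combination -two_mul_add_one_mul_rootParam t
  · push_cast [ht]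
    ring

end Roots

section Toeplitz

variable {r k : ℕ} {c : ℕ → ℚ[X]}

theorem dvd_det_toeplitz_of_lt
    (hc : IsCoeffRec (C (1 / 4) * (1 - X)) (C (r : ℚ)) (C (2 * r - 1)) c) (h0 : c 0 = 1)
    {t : ℕ} (ht : t < r) :
    (X - C (1 / (2 * (t : ℚ) + 1) ^ 2)) ^ k ∣
      (Matrix.of fun ℓ j : Fin k => c (k + 2 * r - 1 + j - ℓ)).det := by
  have := pow_card_dvd_det (Matrix.of fun ℓ j : Fin k => c (k + 2 * r - 1 + j - ℓ))
    (X - C (1 / (2 * (t : ℚ) + 1) ^ 2)) univ fun j _ ℓ =>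
      dvd_iff_isRoot.mpr (hc.eval_root_eq_zero h0 ht (by have := ℓ.isLt; omega))
  rwa [card_univ, Fintype.card_fin] at this

theorem dvd_det_toeplitz_of_le
    (hc : IsCoeffRec (C (1 / 4) * (1 - X)) (C (r : ℚ)) (C (2 * r - 1)) c) (h0 : c 0 = 1)
    {t : ℕ} (ht : r ≤ t) :
    (X - C (1 / (2 * (t : ℚ) + 1) ^ 2)) ^ (k + r - 1 - t) ∣
      (Matrix.of fun ℓ j : Fin k => c (k + 2 * r - 1 + j - ℓ)).det := by
  rw [← det_toeplitz_mulOneSub_iterate_col (C (rootParam t)) _ (by omega) c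
    (fun j => min (t + 1 - r) j) fun j => min_le_right _ _,
    show k + r - 1 - t = k - (t + 1 - r) by omega, ← Fin.card_filter_le_val]
  refine pow_card_dvd_det _ _ _ fun j hj ℓ => dvd_iff_isRoot.mpr ?_
  rw [mem_filter] at hj
  rw [Matrix.of_apply, min_eq_left hj.2, IsRoot, ← coe_evalRingHom, map_mulOneSub_iterate,
    coe_evalRingHom, eval_C]
  exact (congrFun (hc.mulOneSub_iterate_eval_root h0 (by omega)) _).trans
    (binomSeq_eq_zero (by omega))

theorem det_toeplitz_ne_zero
    (hc : IsCoeffRec (C (1 / 4) * (1 - X)) (C (r : ℚ)) (C (2 * r - 1)) c) (h0 : c 0 = 1) :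
    (Matrix.of fun ℓ j : Fin k => c (k + 2 * r - 1 + j - ℓ)).det ≠ 0 := by
  rcases k.eq_zero_or_pos with rfl | hk
  · simp
  have hu := hc.mulOneSub_iterate_eval_root h0 (t := r + k - 1) (by omega)
  rw [show r + k - 1 + 1 - r = k by omega, show r + (r + k - 1) = k + 2 * r - 1 by omega] at hu
  intro hD
  have := congrArg (eval (1 / (2 * ((r + k - 1 : ℕ) : ℚ) + 1) ^ 2)) hD
  rw [← coe_evalRingHom, RingHom.map_det, coe_evalRingHom, eval_zero] at this
  refine pow_ne_zero _ ?_
    ((det_toeplitz_eq_of_mulOneSub_iterate_eq_binomSeq _ _ (by omega) _ hu).symm.trans this)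
  rw [one_add_two_mul_rootParam]
  positivity

theorem injective_one_div_two_mul_add_one_sq :
    Function.Injective fun t : ℕ => 1 / (2 * (t : ℚ) + 1) ^ 2 := by
  intro x y h
  simp only [one_div, inv_inj] at h
  have := (pow_left_inj₀ (by positivity) (by positivity) two_ne_zero).mp h
  exact_mod_cast (by linarith : (x : ℚ) = y)

noncomputable def rootProd (r k : ℕ) : ℚ[X] :=
  (∏ i ∈ range r, (X - C (1 / (2 * (i : ℚ) + 1) ^ 2)) ^ k) *
    ∏ i ∈ range (k - 1), (X - C (1 / (2 * (r : ℚ) + 2 * (i : ℚ) + 1) ^ 2)) ^ (k - 1 - i)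

theorem monic_rootProd (r k : ℕ) : (rootProd r k).Monic :=
  (monic_prod_of_monic _ _ fun _ _ => (monic_X_sub_C _).pow _).mul
    (monic_prod_of_monic _ _ fun _ _ => (monic_X_sub_C _).pow _)

theorem two_mul_natDegree_rootProd (r k : ℕ) :
    2 * (rootProd r k).natDegree = k * (k + 2 * r - 1) := by
  rw [rootProd, Monic.natDegree_mul (monic_prod_of_monic _ _ fun _ _ => (monic_X_sub_C _).pow _)
    (monic_prod_of_monic _ _ fun _ _ => (monic_X_sub_C _).pow _),
    natDegree_prod_of_monic _ _ fun _ _ => (monic_X_sub_C _).pow _,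
    natDegree_prod_of_monic _ _ fun _ _ => (monic_X_sub_C _).pow _]
  simp only [natDegree_pow, natDegree_X_sub_C, mul_one, sum_const, card_range, smul_eq_mul]
  rcases k with _ | k
  · simp
  have := sum_range_sub_mul_two k
  rw [Nat.add_sub_cancel, show k + 1 + 2 * r - 1 = k + 2 * r by omega]
  linear_combination this

theorem rootProd_dvd_det_toeplitz
    (hc : IsCoeffRec (C (1 / 4) * (1 - X)) (C (r : ℚ)) (C (2 * r - 1)) c) (h0 : c 0 = 1) :
    rootProd r k ∣ (Matrix.of fun ℓ j : Fin k => c (k + 2 * r - 1 + j - ℓ)).det := by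
  have hprod : rootProd r k = ∏ t ∈ range (r + (k - 1)),
      (X - C (1 / (2 * (t : ℚ) + 1) ^ 2)) ^ (if t < r then k else k + r - 1 - t) := by
    rw [rootProd, prod_range_add]
    congr 1 <;> refine prod_congr rfl fun i hi => ?_
    · rw [if_pos (mem_range.mp hi)]
    · rw [if_neg (by omega), show k + r - 1 - (r + i) = k - 1 - i by omega]
      push_cast
      ring_nf
  rw [hprod]
  refine prod_dvd_of_coprime
    (fun s _ t _ hst => (pairwise_coprime_X_sub_C injective_one_div_two_mul_add_one_sq hst).pow)
    fun t _ => ?_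
  split_ifs with ht
  · exact dvd_det_toeplitz_of_lt hc h0 ht
  · exact dvd_det_toeplitz_of_le hc h0 (not_lt.mp ht)

theorem natDegree_det_toeplitz_le
    (hc : IsCoeffRec (C (1 / 4) * (1 - X)) (C (r : ℚ)) (C (2 * r - 1)) c) (h0 : c 0 = 1) :
    (Matrix.of fun ℓ j : Fin k => c (k + 2 * r - 1 + j - ℓ)).det.natDegree ≤
      (rootProd r k).natDegree := by
  have hlam : (C (1 / 4 : ℚ) * (1 - X)).natDegree ≤ 1 := by compute_degree
  have := two_mul_natDegree_det_toeplitz_le (k := k) (k + 2 * r - 1) (by omega)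
    (hc.two_mul_natDegree_le hlam (by rw [h0, natDegree_one]))
  have := two_mul_natDegree_rootProd r k
  omega

end Toeplitz

open Polynomial in
theorem stmt_6_general (r : ℕ) (k : ℕ) (c : ℕ → Polynomial ℚ)
    (h0 : c 0 = 1) (h1 : c 1 = C (r : ℚ))
    (hrec : ∀ n : ℕ,
      C ((n : ℚ) + 2) * c (n + 2) + C ((n : ℚ) + 1 - r) * c (n + 1)
        + C (((n : ℚ) + 1 - 2 * r) / 4) * (1 - X) * c n = 0) :
    ∃ c₀ : ℚ, c₀ ≠ 0 ∧
      Matrix.det (Matrix.of fun i j : Fin k => c (k + 2 * r - 1 + j.val - i.val)) =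
        C c₀ * (∏ i ∈ Finset.range r, (X - C (1 / (2 * (i : ℚ) + 1) ^ 2)) ^ k) *
          ∏ i ∈ Finset.range (k - 1),
            (X - C (1 / (2 * (r : ℚ) + 2 * (i : ℚ) + 1) ^ 2)) ^ (k - 1 - i) := by
  have hc := isCoeffRec_of_rec h0 h1 hrec
  refine ⟨_, leadingCoeff_ne_zero.mpr (det_toeplitz_ne_zero (k := k) hc h0), ?_⟩
  rw [mul_assoc]
  exact eq_leadingCoeff_mul_of_monic_of_dvd_of_natDegree_le (monic_rootProd r k)
    (rootProd_dvd_det_toeplitz hc h0) (natDegree_det_toeplitz_le hc h0)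

open Polynomial in
/-- Fix positive integers `r`, `k`. Define `c : ℕ → ℚ[β]` by `c 0 = 1`, `c 1 = r` and
`(n+2)·c (n+2) + (n+1−r)·c (n+1) + (n+1−2r)·((1−β)/4)·c n = 0` for all `n ≥ 0`.
Let `P_k(1,β,0)` be the determinant of the `k×k` matrix with `(i,j)` entry (1-based)
`c (k+2r−1+j−i)`. Then there is a nonzero rational `c₀` with
`P_k(1,β,0) = c₀ · ∏_{i=1}^{r} (β − 1/(2i−1)²)^k · ∏_{i=1}^{k−1} (β − 1/(2r+2i−1)²)^{k−i}`. -/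
theorem stmt_6 (r : ℕ) (hr : 1 ≤ r) (k : ℕ) (hk : 1 ≤ k) (c : ℕ → Polynomial ℚ)
    (h0 : c 0 = 1) (h1 : c 1 = C (r : ℚ))
    (hrec : ∀ n : ℕ,
      C ((n : ℚ) + 2) * c (n + 2) + C ((n : ℚ) + 1 - r) * c (n + 1)
        + C (((n : ℚ) + 1 - 2 * r) / 4) * (1 - X) * c n = 0) :
    ∃ c₀ : ℚ, c₀ ≠ 0 ∧
      Matrix.det (Matrix.of fun i j : Fin k => c (k + 2 * r - 1 + j.val - i.val)) =
        C c₀ * (∏ i ∈ Finset.range r, (X - C (1 / (2 * (i : ℚ) + 1) ^ 2)) ^ k) *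
          ∏ i ∈ Finset.range (k - 1),
            (X - C (1 / (2 * (r : ℚ) + 2 * (i : ℚ) + 1) ^ 2)) ^ (k - 1 - i) :=
  stmt_6_general r k c h0 h1 hrec
end

section
/- Let r ≥ 1 and ℓ ≥ r+1 be integers. Then there exists a nonzero polynomial a(T) ∈ ℚ[T] of degree at most ℓ−r−1 such that the sequence of rational numbers d_n := (−(ℓ−1)/(2ℓ−1))^n · a(n) satisfies (n+2)·d_{n+2} + (n+1−r)·d_{n+1} + (n+1−2r)·(ℓ(ℓ−1)/(2ℓ−1)²)·d_n = 0 for every integer n ≥ 0. -/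
/-!
With `v = (ℓ - 1)/(2ℓ - 1)` one has `ℓ(ℓ - 1)/(2ℓ - 1)² = v(1 - v)`, so after dividing by
`v(-v)ⁿ` the recurrence for `dₙ = (-v)ⁿ a(n)` reads `L a (n) = 0` for the linear operator
`L a = v (T + 2) a(T + 2) - (T + 1 - r) a(T + 1) + (1 - v)(T + 1 - 2r) a(T)`.
For `deg a ≤ m` the `T^(m+1)`-coefficient of `L a` cancels and its `T^m`-coefficient is
`(v(2m + 1 + 2r) - (m + r)) aₘ`, which vanishes for `m = ℓ - r - 1`. Hence `L` maps the
`(m+1)`-dimensional space of polynomials of degree `≤ m` into an `m`-dimensional one and has a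
nonzero kernel.
-/

open Polynomial

namespace Polynomial

lemma mem_degreeLT_succ_iff {R : Type*} [Semiring R] {p : R[X]} {m : ℕ} :
    p ∈ degreeLT R (m + 1) ↔ p.natDegree ≤ m := by
  rw [mem_degreeLT, degree_lt_iff_coeff_zero, natDegree_le_iff_coeff_eq_zero]
  exact forall_congr' fun k => imp_congr_left Nat.succ_le_iff

lemma exists_ne_zero_mem_ker_of_mapsTo_degreeLT {K : Type*} [Field K]
    {L : K[X] →ₗ[K] K[X]} {m : ℕ} (hL : ∀ p ∈ degreeLT K (m + 1), L p ∈ degreeLT K m) :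
    ∃ p ∈ degreeLT K (m + 1), p ≠ 0 ∧ L p = 0 := by
  have hker : LinearMap.ker (L.restrict hL) ≠ ⊥ := LinearMap.ker_ne_bot_of_finrank_lt <| by
    simp [Module.finrank_eq_card_basis (degreeLT.basis K _)]
  obtain ⟨⟨p, hp⟩, hpL, hp0⟩ := Submodule.exists_mem_ne_zero_of_ne_bot hker
  exact ⟨p, hp, by simpa using hp0, by simpa [LinearMap.restrict_apply] using hpL⟩

variable {R : Type*} [CommRing R]

lemma coeff_taylor_of_natDegree_le (c : R) {f : R[X]} {k : ℕ} (hf : f.natDegree ≤ k) :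
    (taylor c f).coeff k = f.coeff k := by
  have : (hasseDeriv k f).natDegree < 1 := by
    have := natDegree_hasseDeriv_le f k
    omega
  rw [taylor_coeff, eval_eq_sum_range' this]
  simp [hasseDeriv_coeff]

lemma coeff_taylor_of_natDegree_le_succ (c : R) {f : R[X]} {k : ℕ} (hf : f.natDegree ≤ k + 1) :
    (taylor c f).coeff k = f.coeff k + (k + 1) * c * f.coeff (k + 1) := by
  have : (hasseDeriv k f).natDegree < 2 := by
    have := natDegree_hasseDeriv_le f k
    omega
  rw [taylor_coeff, eval_eq_sum_range' this]
  simp [Finset.sum_range_succ, hasseDeriv_coeff, Nat.add_comm 1 k, Nat.choose_succ_self_right]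
  ring

end Polynomial

section Recurrence

variable {R : Type*} [CommRing R]

noncomputable def recurrenceOp (v r : R) : R[X] →ₗ[R] R[X] :=
  v • (taylor 2 ∘ₗ LinearMap.mulLeft R X) - taylor 1 ∘ₗ LinearMap.mulLeft R (X - C r)
    + (1 - v) • LinearMap.mulLeft R (X - C (2 * r - 1))

lemma recurrenceOp_apply (v r : R) (p : R[X]) :
    recurrenceOp v r p = v • taylor 2 (X * p) - taylor 1 ((X - C r) * p)
      + (1 - v) • ((X - C (2 * r - 1)) * p) := by
  simp [recurrenceOp]

lemma eval_recurrenceOp (v r x : R) (p : R[X]) :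
    (recurrenceOp v r p).eval x = v * ((x + 2) * p.eval (x + 2)) - (x + 1 - r) * p.eval (x + 1)
      + (1 - v) * ((x + 1 - 2 * r) * p.eval x) := by
  simp only [recurrenceOp_apply, eval_add, eval_sub, eval_smul, eval_mul, eval_X, eval_C,
    taylor_eval, smul_eq_mul]
  ring

variable {v r : R} {p : R[X]} {m : ℕ}

lemma natDegree_X_sub_C_mul_le (a : R) (hp : p.natDegree ≤ m) :
    ((X - C a) * p).natDegree ≤ m + 1 :=
  (natDegree_mul_le_of_le (natDegree_X_sub_C_le a) hp).trans_eq (add_comm 1 m)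

lemma natDegree_X_mul_le (hp : p.natDegree ≤ m) : (X * p).natDegree ≤ m + 1 := by
  simpa using natDegree_X_sub_C_mul_le 0 hp

lemma natDegree_recurrenceOp_le (hp : p.natDegree ≤ m) :
    (recurrenceOp v r p).natDegree ≤ m + 1 := by
  rw [recurrenceOp_apply]
  refine natDegree_add_le_of_degree_le ((natDegree_sub_le _ _).trans (max_le ?_ ?_))
    ((natDegree_smul_le _ _).trans (natDegree_X_sub_C_mul_le _ hp))
  · exact (natDegree_smul_le _ _).trans ((natDegree_taylor _ _).trans_le (natDegree_X_mul_le hp))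
  · exact (natDegree_taylor _ _).trans_le (natDegree_X_sub_C_mul_le _ hp)

lemma coeff_recurrenceOp_succ (hp : p.natDegree ≤ m) :
    (recurrenceOp v r p).coeff (m + 1) = 0 := by
  have hp' : p.coeff (m + 1) = 0 := coeff_eq_zero_of_natDegree_lt (by omega)
  rw [recurrenceOp_apply, coeff_add, coeff_sub, coeff_smul, coeff_smul,
    coeff_taylor_of_natDegree_le _ (natDegree_X_mul_le hp),
    coeff_taylor_of_natDegree_le _ (natDegree_X_sub_C_mul_le _ hp)]
  simp only [sub_mul, coeff_sub, coeff_C_mul, coeff_X_mul, hp', smul_eq_mul]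
  ring

lemma coeff_recurrenceOp_self (hp : p.natDegree ≤ m) :
    (recurrenceOp v r p).coeff m = (v * (2 * m + 1 + 2 * r) - (m + r)) * p.coeff m := by
  have hp' : p.coeff (m + 1) = 0 := coeff_eq_zero_of_natDegree_lt (by omega)
  rw [recurrenceOp_apply, coeff_add, coeff_sub, coeff_smul, coeff_smul,
    coeff_taylor_of_natDegree_le_succ _ (natDegree_X_mul_le hp),
    coeff_taylor_of_natDegree_le_succ _ (natDegree_X_sub_C_mul_le _ hp)]
  simp only [sub_mul, coeff_sub, coeff_C_mul, coeff_X_mul, hp', smul_eq_mul]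
  ring

lemma recurrenceOp_mem_degreeLT (hv : v * (2 * m + 1 + 2 * r) = m + r)
    (hp : p ∈ degreeLT R (m + 1)) : recurrenceOp v r p ∈ degreeLT R m := by
  rw [mem_degreeLT_succ_iff] at hp
  rw [mem_degreeLT, degree_lt_iff_coeff_zero]
  intro k hk
  obtain rfl | rfl | hk := show k = m ∨ k = m + 1 ∨ m + 1 < k by omega
  · rw [coeff_recurrenceOp_self hp, hv, sub_self, zero_mul]
  · exact coeff_recurrenceOp_succ hp
  · exact coeff_eq_zero_of_natDegree_lt ((natDegree_recurrenceOp_le hp).trans_lt hk)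

end Recurrence

lemma exists_ne_zero_natDegree_le_recurrenceOp_eq_zero {K : Type*} [Field K] {v r : K} {m : ℕ}
    (hv : v * (2 * m + 1 + 2 * r) = m + r) :
    ∃ p : K[X], p ≠ 0 ∧ p.natDegree ≤ m ∧ recurrenceOp v r p = 0 := by
  obtain ⟨p, hp, hp0, hpL⟩ :=
    exists_ne_zero_mem_ker_of_mapsTo_degreeLT fun _ => recurrenceOp_mem_degreeLT hv
  exact ⟨p, hp0, mem_degreeLT_succ_iff.mp hp, hpL⟩

theorem stmt_7_general (r ℓ : ℕ) (hℓ : r + 1 ≤ ℓ) :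
    ∃ a : Polynomial ℚ, a ≠ 0 ∧ a.natDegree ≤ ℓ - r - 1 ∧
      ∀ n : ℕ,
        ((n : ℚ) + 2) *
            ((-(((ℓ : ℚ) - 1) / (2 * (ℓ : ℚ) - 1))) ^ (n + 2) *
              Polynomial.eval ((n : ℚ) + 2) a)
        + ((n : ℚ) + 1 - r) *
            ((-(((ℓ : ℚ) - 1) / (2 * (ℓ : ℚ) - 1))) ^ (n + 1) *
              Polynomial.eval ((n : ℚ) + 1) a)
        + ((n : ℚ) + 1 - 2 * r) * ((ℓ : ℚ) * ((ℓ : ℚ) - 1) / (2 * (ℓ : ℚ) - 1) ^ 2) *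
            ((-(((ℓ : ℚ) - 1) / (2 * (ℓ : ℚ) - 1))) ^ n *
              Polynomial.eval (n : ℚ) a)
        = 0 := by
  set v : ℚ := ((ℓ : ℚ) - 1) / (2 * ℓ - 1)
  have hℓ₀ : (2 * ℓ - 1 : ℚ) ≠ 0 := by
    have : (1 : ℚ) ≤ ℓ := by exact_mod_cast (by omega : 1 ≤ ℓ)
    linarith
  have hm : ((ℓ - r - 1 : ℕ) : ℚ) = ℓ - r - 1 := by
    rw [Nat.cast_sub (by omega), Nat.cast_sub (by omega)]
    push_cast
    ring
  have hv : v * (2 * ℓ - 1) = ℓ - 1 := div_mul_cancel₀ _ hℓ₀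
  clear_value v
  obtain ⟨a, ha0, hdeg, ha⟩ := exists_ne_zero_natDegree_le_recurrenceOp_eq_zero
    (v := v) (r := (r : ℚ)) (m := ℓ - r - 1) (by rw [hm]; linear_combination hv)
  refine ⟨a, ha0, hdeg, fun n => ?_⟩
  have hrec := congrArg (eval (n : ℚ)) ha
  rw [eval_recurrenceOp, eval_zero] at hrec
  have hquot : (ℓ : ℚ) * (ℓ - 1) / (2 * ℓ - 1) ^ 2 = (1 - v) * v := by
    rw [div_eq_iff (pow_ne_zero 2 hℓ₀)]
    linear_combination (v * (2 * ℓ - 1) - ℓ) * hv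
  rw [hquot]
  linear_combination ((-v) ^ n * v) * hrec

/-- Let `r ≥ 1` and `ℓ ≥ r+1` be integers. There exists a nonzero polynomial
`a ∈ ℚ[T]` of degree at most `ℓ−r−1` such that the sequence
`d n := (−(ℓ−1)/(2ℓ−1))^n · a(n)` satisfies
`(n+2)·d (n+2) + (n+1−r)·d (n+1) + (n+1−2r)·(ℓ(ℓ−1)/(2ℓ−1)²)·d n = 0` for all `n ≥ 0`. -/
theorem stmt_7 (r ℓ : ℕ) (hr : 1 ≤ r) (hℓ : r + 1 ≤ ℓ) :
    ∃ a : Polynomial ℚ, a ≠ 0 ∧ a.natDegree ≤ ℓ - r - 1 ∧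
      ∀ n : ℕ,
        ((n : ℚ) + 2) *
            ((-(((ℓ : ℚ) - 1) / (2 * (ℓ : ℚ) - 1))) ^ (n + 2) *
              Polynomial.eval ((n : ℚ) + 2) a)
        + ((n : ℚ) + 1 - r) *
            ((-(((ℓ : ℚ) - 1) / (2 * (ℓ : ℚ) - 1))) ^ (n + 1) *
              Polynomial.eval ((n : ℚ) + 1) a)
        + ((n : ℚ) + 1 - 2 * r) * ((ℓ : ℚ) * ((ℓ : ℚ) - 1) / (2 * (ℓ : ℚ) - 1) ^ 2) *
            ((-(((ℓ : ℚ) - 1) / (2 * (ℓ : ℚ) - 1))) ^ n *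
              Polynomial.eval (n : ℚ) a)
        = 0 :=
  stmt_7_general r ℓ hℓ
end

section
/- The polynomial P_k(1,β,0) ∈ ℚ[β] has degree exactly k(k+2r−1)/2 (note that k(k+2r−1) is always even). -/
/-!
Reversing the rows turns the matrix into the Hankel matrix `(c (2r + i + j))`. Every `c n` has
degree at most `n / 2` in `β`, and the coefficient of `β ^ m` in `c (2m)` is
`(-1/4) ^ m * choose (r - 1/2) m`. Hence the determinant has degree at most `k (k + 2r - 1) / 2`,
and its coefficient there is the determinant of the matrix of these top coefficients: a
checkerboard matrix, which splits by parity into two Hankel matrices `(choose x (b + i + j))`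
with `x = r - 1/2` (up to a diagonal scaling). Such a Hankel matrix is nonsingular as soon as `x`
is not an integer: after rescaling row `i`, its entries are the values at `n` distinct points of
polynomials `P_j` of degree `< n`, whose values at the points `0, -1, …, -(n-1)` form an invertible
triangular matrix.
-/

open Polynomial Finset Matrix

theorem Ring.choose_eq_prod_range_div {K : Type*} [Field K] [CharZero K] (x : K) (n : ℕ) :
    Ring.choose x n = (∏ q ∈ range n, (x - q)) / n.factorial := by
  rw [Ring.choose_eq_smul, ← aeval_eq_smeval, smul_eq_mul, inv_mul_eq_div,
    ← descPochhammer_eval_eq_prod_range, ← descPochhammer_map (algebraMap ℤ K),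
    eval_map_algebraMap]

theorem Ring.choose_succ_eq_mul_div {K : Type*} [Field K] [CharZero K] (x : K) (n : ℕ) :
    Ring.choose x (n + 1) = Ring.choose x n * (x - n) / (n + 1) := by
  simp only [Ring.choose_eq_prod_range_div, prod_range_succ, Nat.factorial_succ]
  push_cast
  field_simp

theorem Finset.prod_range_sub_ne_zero {K : Type*} [Field K] {x : K} (hx : ∀ z : ℤ, x ≠ z)
    (n : ℕ) : ∏ q ∈ range n, (x - q) ≠ 0 :=
  prod_ne_zero_iff.2 fun q _ => sub_ne_zero.2 (by exact_mod_cast hx q)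

theorem natCast_sub_half_ne_intCast (r : ℕ) (z : ℤ) : (r : ℚ) - 1 / 2 ≠ z := by
  intro h
  have h2 : ((2 * r - 1 : ℤ) : ℚ) = ((2 * z : ℤ) : ℚ) := by push_cast; linarith
  have := Int.cast_injective h2
  omega

theorem Matrix.det_eval_ne_zero_of_det_eval_ne_zero {K ι : Type*} [Field K] [Fintype ι]
    [DecidableEq ι] (P : ι → K[X]) (hP : ∀ j, (P j).natDegree < Fintype.card ι) {u v : ι → K}
    (hv : Function.Injective v) (hu : (of fun i j => (P j).eval (u i)).det ≠ 0) :
    (of fun i j => (P j).eval (v i)).det ≠ 0 := by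
  have mulVec_eq (t w : ι → K) :
      (of fun i j => (P j).eval (t i)) *ᵥ w = fun i => (∑ j, C (w j) * P j).eval (t i) := by
    ext i
    simp [mulVec, dotProduct, eval_finsetSum, mul_comm]
  intro hdet
  obtain ⟨w, hw, hvw⟩ := exists_mulVec_eq_zero_iff.2 hdet
  obtain ⟨j₀, -⟩ := Function.ne_iff.1 hw
  have hcard : 0 < Fintype.card ι := Fintype.card_pos_iff.2 ⟨j₀⟩
  have hp : ∑ j, C (w j) * P j = 0 := by
    refine eq_zero_of_natDegree_lt_card_of_eval_eq_zero _ hv (fun i => ?_) ?_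
    · simpa [mulVec_eq] using congrFun hvw i
    · refine lt_of_le_of_lt (natDegree_sum_le_of_forall_le _ _ (n := Fintype.card ι - 1)
        fun j _ => (natDegree_C_mul_le _ _).trans ?_) (by omega)
      have := hP j
      omega
  exact hw (eq_zero_of_mulVec_eq_zero hu (by ext; simp [mulVec_eq, hp]))

section ChoosePoly

variable {K : Type*} [Field K]

/-- The factor of `(y + n - 1)! * choose x (y + j)` that is polynomial in `y`, see
`factorial_mul_choose_eq_mul_eval_choosePoly`. -/
noncomputable def choosePoly (x : K) (n j : ℕ) : K[X] :=
  (∏ q ∈ range j, (C (x - q) - X)) * ∏ q ∈ range (n - 1 - j), (X + C ((j + 1 + q : ℕ) : K))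

theorem natDegree_choosePoly_le (x : K) {n j : ℕ} (hj : j < n) :
    (choosePoly x n j).natDegree ≤ n - 1 := by
  have hlin (s : Finset ℕ) (f : ℕ → K[X]) (hf : ∀ q, (f q).natDegree ≤ 1) :
      (∏ q ∈ s, f q).natDegree ≤ s.card :=
    (natDegree_prod_le _ _).trans ((sum_le_card_nsmul _ _ 1 fun q _ => hf q).trans (by simp))
  refine (natDegree_mul_le_of_le (hlin _ _ fun q => ?_) (hlin _ _ fun q => ?_)).trans ?_
  · compute_degree
  · compute_degree
  · simp only [card_range]
    omega

theorem eval_neg_choosePoly_of_lt (x : K) {n j t : ℕ} (hjt : j < t) (htn : t < n) :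
    (choosePoly x n j).eval (-(t : K)) = 0 := by
  simp only [choosePoly, eval_mul, eval_prod]
  refine mul_eq_zero_of_right _ (prod_eq_zero (i := t - j - 1) (by simp; omega) ?_)
  rw [eval_add, eval_X, eval_C, neg_add_eq_zero]
  exact congrArg Nat.cast (by omega)

theorem eval_neg_choosePoly_self_ne_zero [CharZero K] {x : K} (hx : ∀ z : ℤ, x ≠ z) (n t : ℕ) :
    (choosePoly x n t).eval (-(t : K)) ≠ 0 := by
  simp only [choosePoly, eval_mul, eval_prod]
  refine mul_ne_zero (prod_ne_zero_iff.2 fun q _ => ?_) (prod_ne_zero_iff.2 fun q _ => ?_)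
  · rw [eval_sub, eval_C, eval_X, sub_neg_eq_add, ne_eq, sub_add_eq_add_sub, sub_eq_zero,
      ← eq_sub_iff_add_eq]
    exact_mod_cast hx (q - t)
  · rw [eval_add, eval_X, eval_C, Nat.cast_add, Nat.cast_add_one, add_assoc, neg_add_cancel_left]
    exact_mod_cast (by omega : 1 + q ≠ 0)

theorem factorial_mul_choose_eq_mul_eval_choosePoly [CharZero K] (x : K) {n j : ℕ} (hj : j < n)
    (y : ℕ) : ((y + n - 1).factorial : K) * Ring.choose x (y + j) =
      (∏ q ∈ range y, (x - q)) * (choosePoly x n j).eval (y : K) := by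
  have hfact : ((y + n - 1).factorial : K) =
      (y + j).factorial * ∏ q ∈ range (n - 1 - j), ((y : K) + ((j + 1 + q : ℕ) : K)) := by
    rw [show y + n - 1 = y + j + (n - 1 - j) by omega, ← Nat.factorial_mul_ascFactorial,
      Nat.ascFactorial_eq_prod_range]
    push_cast
    ring_nf
  have hnum : ∏ q ∈ range (y + j), (x - q) =
      (∏ q ∈ range y, (x - q)) * ∏ q ∈ range j, (x - q - y) := by
    rw [prod_range_add]
    congr 1
    refine prod_congr rfl fun q _ => ?_
    push_cast
    ring
  have hfact_ne : ((y + j).factorial : K) ≠ 0 := by exact_mod_cast (y + j).factorial_ne_zero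
  simp only [Ring.choose_eq_prod_range_div, hnum, hfact, choosePoly, eval_mul, eval_prod,
    eval_sub, eval_add, eval_C, eval_X]
  field_simp

theorem det_hankel_choose_ne_zero [CharZero K] {x : K} (hx : ∀ z : ℤ, x ≠ z) (b n : ℕ) :
    (of fun i j : Fin n => Ring.choose x (b + i + j)).det ≠ 0 := by
  let R (i : Fin n) : K := (∏ q ∈ range (b + i), (x - q)) / ((b + i + n - 1).factorial : K)
  let E : Matrix (Fin n) (Fin n) K := of fun i j => (choosePoly x n j).eval ((b + i : ℕ) : K)
  have hfactor : (of fun i j : Fin n => Ring.choose x (b + i + j)) = of fun i j => R i * E i j := by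
    ext i j
    simp only [R, E, of_apply]
    rw [div_mul_eq_mul_div, eq_div_iff (by exact_mod_cast Nat.factorial_ne_zero _), mul_comm,
      factorial_mul_choose_eq_mul_eval_choosePoly x j.2]
  have hupper : (of fun t j : Fin n => (choosePoly x n j).eval (-(t : K))).det ≠ 0 := by
    have htri : (of fun t j : Fin n => (choosePoly x n j).eval (-(t : K))).IsUpperTriangular :=
      fun t j hjt => eval_neg_choosePoly_of_lt x hjt t.2
    rw [det_of_isUpperTriangular htri]
    exact prod_ne_zero_iff.2 fun t _ => eval_neg_choosePoly_self_ne_zero hx n t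
  rw [hfactor, det_mul_column]
  refine mul_ne_zero (prod_ne_zero_iff.2 fun i _ => div_ne_zero (prod_range_sub_ne_zero hx _)
    (by exact_mod_cast Nat.factorial_ne_zero _)) ?_
  refine det_eval_ne_zero_of_det_eval_ne_zero _ (fun j => ?_) (fun i i' h => ?_) hupper
  · rw [Fintype.card_fin]
    exact (natDegree_choosePoly_le x j.2).trans_lt (Nat.sub_one_lt_of_lt j.2)
  · exact Fin.ext (by exact_mod_cast add_left_cancel (Nat.cast_injective h))

end ChoosePoly

theorem det_hankel_pow_mul_ne_zero {K : Type*} [Field K] {t : K} (ht : t ≠ 0) (f : ℕ → K)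
    (b n : ℕ) (hf : (of fun i j : Fin n => f (b + i + j)).det ≠ 0) :
    (of fun i j : Fin n => t ^ (b + i + j) * f (b + i + j)).det ≠ 0 := by
  let F : Matrix (Fin n) (Fin n) K := of fun i j => f (b + i + j)
  let G : Matrix (Fin n) (Fin n) K := of fun i j => t ^ (j : ℕ) * F i j
  have hsplit : (of fun i j : Fin n => t ^ (b + i + j) * f (b + i + j)) =
      of fun i j : Fin n => t ^ (b + (i : ℕ)) * G i j := by
    ext i j
    simp only [F, G, of_apply, pow_add]
    ring
  rw [hsplit, det_mul_column, det_mul_row]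
  exact mul_ne_zero (prod_ne_zero_iff.2 fun _ _ => pow_ne_zero _ ht)
    (mul_ne_zero (prod_ne_zero_iff.2 fun _ _ => pow_ne_zero _ ht) hf)

def finParityEquiv (k p : ℕ) (hp : p < 2) :
    Fin ((k + 1 - p) / 2) ≃ {i : Fin k // i.val % 2 = p} where
  toFun j := ⟨⟨2 * j + p, by omega⟩, by simp; omega⟩
  invFun i := ⟨i.1 / 2, by have := i.2; have := i.1.2; omega⟩
  left_inv j := Fin.ext (by simp; omega)
  right_inv i := Subtype.ext (Fin.ext (by have := i.2; simp; omega))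

theorem det_toSquareBlockProp_checkerboard {R : Type*} [CommRing R] (h : ℕ → R) (k p : ℕ)
    (hp : p < 2) :
    (toSquareBlockProp (of fun i j : Fin k =>
        if Even (i.val + j.val) then h ((i.val + j.val) / 2) else 0)
      (fun i => i.val % 2 = p)).det =
      (of fun i j : Fin ((k + 1 - p) / 2) => h (p + (i + j))).det := by
  rw [← det_submatrix_equiv_self (finParityEquiv k p hp)]
  congr 1
  ext i j
  simp only [toSquareBlockProp, finParityEquiv, submatrix_apply, toBlock_apply, of_apply,
    Equiv.coe_fn_mk]
  rw [if_pos ⟨p + (i + j), by omega⟩]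
  congr 1
  omega

theorem det_checkerboard {R : Type*} [CommRing R] (h : ℕ → R) (k : ℕ) :
    (of fun i j : Fin k => if Even (i.val + j.val) then h ((i.val + j.val) / 2) else 0).det =
      (of fun i j : Fin ((k + 1) / 2) => h (i + j)).det *
        (of fun i j : Fin (k / 2) => h (1 + (i + j))).det := by
  rw [twoBlockTriangular_det' _ (fun i => i.val % 2 = 0),
    equiv_block_det _ (p := fun i : Fin k => ¬ i.val % 2 = 0)
      (q := fun i : Fin k => i.val % 2 = 1) (by omega),
    det_toSquareBlockProp_checkerboard h k 0 (by norm_num),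
    det_toSquareBlockProp_checkerboard h k 1 (by norm_num)]
  · simp
  · intro i hi j hj
    simp [Nat.even_iff]
    omega

theorem det_checkerboard_pow_mul_choose_ne_zero {K : Type*} [Field K] [CharZero K] {t x : K}
    (ht : t ≠ 0) (hx : ∀ z : ℤ, x ≠ z) (b k : ℕ) :
    (of fun i j : Fin k => if Even (2 * b + i + j) then
      t ^ ((2 * b + i + j) / 2) * Ring.choose x ((2 * b + i + j) / 2) else 0).det ≠ 0 := by
  have hshift : (of fun i j : Fin k => if Even (2 * b + i + j) then
      t ^ ((2 * b + i + j) / 2) * Ring.choose x ((2 * b + i + j) / 2) else 0) =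
      of fun i j : Fin k => if Even (i.val + j.val) then
        (fun m => t ^ (b + m) * Ring.choose x (b + m)) ((i.val + j.val) / 2) else 0 := by
    ext i j
    have hpar : Even (2 * b + i + j) ↔ Even (i.val + j.val) := by
      rw [add_assoc, Nat.even_add]
      simp
    have hhalf : (2 * b + i + j) / 2 = b + (i.val + j.val) / 2 := by omega
    simp only [of_apply, hpar, hhalf]
  rw [hshift, det_checkerboard (fun m => t ^ (b + m) * Ring.choose x (b + m))]
  simp only [← add_assoc]
  exact mul_ne_zero (det_hankel_pow_mul_ne_zero ht _ _ _ (det_hankel_choose_ne_zero hx _ _))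
    (det_hankel_pow_mul_ne_zero ht _ _ _ (det_hankel_choose_ne_zero hx _ _))

theorem Nat.sum_div_two_le {ι : Type*} (s : Finset ι) (w : ι → ℕ) :
    ∑ i ∈ s, w i / 2 ≤ (∑ i ∈ s, w i) / 2 := by
  rw [Nat.le_div_iff_mul_le two_pos, sum_mul]
  exact sum_le_sum fun i _ => Nat.div_mul_le_self _ _

theorem Nat.sum_div_two_of_forall_even {ι : Type*} {s : Finset ι} {w : ι → ℕ}
    (hw : ∀ i ∈ s, Even (w i)) : ∑ i ∈ s, w i / 2 = (∑ i ∈ s, w i) / 2 := by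
  have htwice : ∑ i ∈ s, w i = 2 * ∑ i ∈ s, w i / 2 := by
    rw [mul_sum]
    exact sum_congr rfl fun i hi => (Nat.two_mul_div_two_of_even (hw i hi)).symm
  rw [htwice, Nat.mul_div_cancel_left _ two_pos]

theorem Nat.sum_div_two_lt_of_exists_odd {ι : Type*} {s : Finset ι} {w : ι → ℕ}
    (hodd : ∃ i ∈ s, ¬Even (w i)) (heven : Even (∑ i ∈ s, w i)) :
    ∑ i ∈ s, w i / 2 < (∑ i ∈ s, w i) / 2 := by
  obtain ⟨i₀, hi₀, hodd₀⟩ := hodd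
  have hlt : ∑ i ∈ s, 2 * (w i / 2) < ∑ i ∈ s, w i :=
    sum_lt_sum (fun i _ => Nat.mul_div_le _ _)
      ⟨i₀, hi₀, by rw [Nat.not_even_iff] at hodd₀; omega⟩
  rw [← mul_sum, ← Nat.two_mul_div_two_of_even heven] at hlt
  omega

theorem Fin.sum_add_val_add_sum_val (a k : ℕ) :
    ∑ i : Fin k, (a + (i : ℕ)) + ∑ i : Fin k, (i : ℕ) = k * (k + a - 1) := by
  have hgauss := sum_range_id_mul_two k
  rw [sum_add_distrib, sum_const, smul_eq_mul, Fin.sum_univ_eq_sum_range (fun i => i) k]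
  rcases k with _ | k
  · simp
  · rw [show k + 1 + a - 1 = k + a by omega]
    rw [Nat.add_sub_cancel] at hgauss
    nlinarith [hgauss]

theorem Polynomial.coeff_prod_sum_of_natDegree_le {R ι : Type*} [CommSemiring R] (s : Finset ι)
    (f : ι → R[X]) (d : ι → ℕ) (h : ∀ i ∈ s, (f i).natDegree ≤ d i) :
    (∏ i ∈ s, f i).coeff (∑ i ∈ s, d i) = ∏ i ∈ s, (f i).coeff (d i) := by
  induction s using Finset.cons_induction with
  | empty => simp
  | cons a s ha ih =>
    rw [prod_cons, sum_cons, prod_cons, coeff_mul_add_eq_of_natDegree_le (h a (mem_cons_self a s))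
      ((natDegree_prod_le _ _).trans (sum_le_sum fun i hi => h i (mem_cons_of_mem hi))),
      ih fun i hi => h i (mem_cons_of_mem hi)]

theorem Equiv.Perm.sum_comp_add {ι M : Type*} [Fintype ι] [AddCommMonoid M] (σ : Equiv.Perm ι)
    (u v : ι → M) : ∑ i, (u (σ i) + v i) = ∑ i, u i + ∑ i, v i := by
  rw [sum_add_distrib, Equiv.sum_comp]

namespace Matrix

variable {n R : Type*} [Fintype n] [CommRing R] {M : Matrix n n R[X]} {u v : n → ℕ}

theorem natDegree_prod_perm_le_half (h : ∀ i j, (M i j).natDegree ≤ (u i + v j) / 2)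
    (σ : Equiv.Perm n) : (∏ i, M (σ i) i).natDegree ≤ ∑ i, (u (σ i) + v i) / 2 :=
  (natDegree_prod_le _ _).trans (sum_le_sum fun _ _ => h _ _)

theorem natDegree_det_le_half [DecidableEq n] (h : ∀ i j, (M i j).natDegree ≤ (u i + v j) / 2) :
    M.det.natDegree ≤ (∑ i, u i + ∑ i, v i) / 2 := by
  rw [det_apply']
  refine natDegree_sum_le_of_forall_le _ _ fun σ _ => ?_
  refine (natDegree_mul_le_of_le (natDegree_intCast _).le
    (natDegree_prod_perm_le_half h σ)).trans ?_
  rw [zero_add, ← σ.sum_comp_add u v]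
  exact Nat.sum_div_two_le _ _

/-- Only the permutations along which every weight `u i + v j` is even reach the degree
bound, each through the top coefficients of its entries. -/
theorem coeff_det_half [DecidableEq n] (h : ∀ i j, (M i j).natDegree ≤ (u i + v j) / 2)
    (heven : Even (∑ i, u i + ∑ i, v i)) :
    M.det.coeff ((∑ i, u i + ∑ i, v i) / 2) =
      (of fun i j => if Even (u i + v j) then (M i j).coeff ((u i + v j) / 2) else 0).det := by
  rw [det_apply', det_apply', finsetSum_coeff]
  refine sum_congr rfl fun σ _ => ?_
  rw [coeff_intCast_mul, ← σ.sum_comp_add u v]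
  congr 1
  by_cases hσ : ∀ i, Even (u (σ i) + v i)
  · rw [← Nat.sum_div_two_of_forall_even fun i _ => hσ i,
      coeff_prod_sum_of_natDegree_le _ _ _ fun i _ => h _ _]
    exact prod_congr rfl fun i _ => by simp [hσ i]
  · obtain ⟨i₀, hi₀⟩ := not_forall.1 hσ
    rw [← σ.sum_comp_add u v] at heven
    rw [coeff_eq_zero_of_natDegree_lt ((natDegree_prod_perm_le_half h σ).trans_lt
        (Nat.sum_div_two_lt_of_exists_odd ⟨i₀, mem_univ _, hi₀⟩ heven)),
      prod_eq_zero (mem_univ i₀) (by simp [hi₀])]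

theorem degree_det_submatrix_perm [DecidableEq n] (M : Matrix n n R[X]) (σ : Equiv.Perm n) :
    (M.submatrix σ id).det.degree = M.det.degree := by
  rw [det_permute]
  rcases Int.units_eq_one_or (Equiv.Perm.sign σ) with hs | hs <;> simp [hs]

theorem of_toeplitz_eq_submatrix_revPerm {α : Type*} (f : ℕ → α) (e k : ℕ) :
    (of fun i j : Fin k => f (k + e - 1 + j - i)) =
      (of fun i j : Fin k => f (e + i + j)).submatrix Fin.revPerm id := by
  ext i j
  simp only [submatrix_apply, of_apply, Fin.revPerm_apply, Fin.val_rev, id]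
  exact congrArg f (by have := i.2; omega)

end Matrix

def SolvesRecurrence (s : ℚ) (c : ℕ → ℚ[X]) : Prop :=
  ∀ n : ℕ, C ((n : ℚ) + 2) * c (n + 2) + C ((n : ℚ) + 1 - s) * c (n + 1)
    + C (((n : ℚ) + 1 - 2 * s) / 4) * (1 - X) * c n = 0

namespace SolvesRecurrence

variable {s : ℚ} {c : ℕ → ℚ[X]}

theorem eq_add_two (hc : SolvesRecurrence s c) (n : ℕ) :
    c (n + 2) = C ((n + 2 : ℚ)⁻¹) *
      (C (s - n - 1) * c (n + 1) + C (((n : ℚ) + 1 - 2 * s) / 4) * ((X - 1) * c n)) := by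
  have hn : (n : ℚ) + 2 ≠ 0 := by positivity
  calc c (n + 2) = C ((n + 2 : ℚ)⁻¹) * (C ((n : ℚ) + 2) * c (n + 2)) := by
        rw [← mul_assoc, ← C_mul, inv_mul_cancel₀ hn, C_1, one_mul]
    _ = _ := by
        have h := hc n
        simp only [C_sub, C_add, C_1, map_natCast] at h ⊢
        linear_combination C ((n + 2 : ℚ)⁻¹) * h

theorem natDegree_le_half (hc : SolvesRecurrence s c) (h0 : (c 0).natDegree = 0)
    (h1 : (c 1).natDegree = 0) (n : ℕ) : (c n).natDegree ≤ n / 2 := by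
  induction n using Nat.twoStepInduction with
  | zero => simp [h0]
  | one => simp [h1]
  | more n ih ih' =>
    rw [hc.eq_add_two n]
    refine (natDegree_C_mul_le _ _).trans (natDegree_add_le_of_degree_le ?_ ?_)
    · exact (natDegree_C_mul_le _ _).trans (ih'.trans (by omega))
    · refine (natDegree_C_mul_le _ _).trans ((natDegree_mul_le_of_le (n := n / 2)
        (by compute_degree) ih).trans (by omega))

theorem coeff_two_mul (hc : SolvesRecurrence s c) (h0 : c 0 = 1) (h1 : (c 1).natDegree = 0)
    (m : ℕ) : (c (2 * m)).coeff m = (-1 / 4) ^ m * Ring.choose (s - 1 / 2) m := by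
  have hdeg := hc.natDegree_le_half (by simp [h0]) h1
  induction m with
  | zero => simp [h0]
  | succ m ih =>
    have hodd : (c (2 * m + 1)).coeff (m + 1) = 0 :=
      coeff_eq_zero_of_natDegree_lt ((hdeg _).trans_lt (by omega))
    have hshift : ((X - 1) * c (2 * m)).coeff (m + 1) = (c (2 * m)).coeff m := by
      rw [sub_mul, one_mul, coeff_sub, coeff_X_mul,
        coeff_eq_zero_of_natDegree_lt (n := m + 1) ((hdeg _).trans_lt (by omega)), sub_zero]
    rw [show 2 * (m + 1) = 2 * m + 2 by ring, hc.eq_add_two, coeff_C_mul, coeff_add, coeff_C_mul,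
      coeff_C_mul, hodd, hshift, ih, Ring.choose_succ_eq_mul_div]
    push_cast
    field_simp
    ring

theorem coeff_div_two_of_even (hc : SolvesRecurrence s c) (h0 : c 0 = 1)
    (h1 : (c 1).natDegree = 0) {n : ℕ} (hn : Even n) :
    (c n).coeff (n / 2) = (-1 / 4) ^ (n / 2) * Ring.choose (s - 1 / 2) (n / 2) := by
  rw [← hc.coeff_two_mul h0 h1, Nat.two_mul_div_two_of_even hn]

theorem degree_det_hankel (hc : SolvesRecurrence s c) (h0 : c 0 = 1) (h1 : (c 1).natDegree = 0)
    (hs : ∀ z : ℤ, s - 1 / 2 ≠ z) (b k : ℕ) :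
    (of fun i j : Fin k => c (2 * b + i + j)).det.degree = ↑(k * (k + 2 * b - 1) / 2) := by
  set H : Matrix (Fin k) (Fin k) ℚ[X] := of fun i j => c (2 * b + i + j)
  have hdeg (i j : Fin k) : (H i j).natDegree ≤ (2 * b + i + j) / 2 :=
    hc.natDegree_le_half (by rw [h0, natDegree_one]) h1 _
  have hsum := Fin.sum_add_val_add_sum_val (2 * b) k
  have heven : Even (k * (k + 2 * b - 1)) := by
    rcases Nat.even_or_odd k with hk | ⟨t, ht⟩
    · exact hk.mul_right _
    · exact (show Even (k + 2 * b - 1) from ⟨t + b, by omega⟩).mul_left _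
  have hupper := natDegree_det_le_half
    (u := fun i : Fin k => 2 * b + (i : ℕ)) (v := fun j : Fin k => (j : ℕ)) hdeg
  have htop := coeff_det_half
    (u := fun i : Fin k => 2 * b + (i : ℕ)) (v := fun j : Fin k => (j : ℕ)) hdeg (hsum ▸ heven)
  rw [hsum] at hupper htop
  have htop_eq : (of fun i j : Fin k => if Even (2 * b + i + j) then
      (H i j).coeff ((2 * b + i + j) / 2) else 0) = of fun i j : Fin k => if Even (2 * b + i + j)
      then (-1 / 4 : ℚ) ^ ((2 * b + i + j) / 2) * Ring.choose (s - 1 / 2) ((2 * b + i + j) / 2)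
      else 0 := by
    ext i j
    simp only [of_apply]
    split_ifs with hij
    · exact hc.coeff_div_two_of_even h0 h1 hij
    · rfl
  have hcoeff : H.det.coeff (k * (k + 2 * b - 1) / 2) ≠ 0 := by
    rw [htop, htop_eq]
    exact det_checkerboard_pow_mul_choose_ne_zero (by norm_num) hs b k
  rw [degree_eq_natDegree fun h => hcoeff (by rw [h, coeff_zero]),
    le_antisymm hupper (le_natDegree_of_ne_zero hcoeff)]

end SolvesRecurrence

open Polynomial in
theorem stmt_8_general (r : ℕ) (k : ℕ) (c : ℕ → Polynomial ℚ)
    (h0 : c 0 = 1) (h1 : c 1 = C (r : ℚ))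
    (hrec : ∀ n : ℕ,
      C ((n : ℚ) + 2) * c (n + 2) + C ((n : ℚ) + 1 - r) * c (n + 1)
        + C (((n : ℚ) + 1 - 2 * r) / 4) * (1 - X) * c n = 0) :
    (Matrix.det (Matrix.of fun i j : Fin k =>
        c (k + 2 * r - 1 + j.val - i.val))).degree =
      ((k * (k + 2 * r - 1) / 2 : ℕ) : WithBot ℕ) := by
  rw [of_toeplitz_eq_submatrix_revPerm, degree_det_submatrix_perm]
  exact SolvesRecurrence.degree_det_hankel hrec h0 (by rw [h1, natDegree_C])
    (natCast_sub_half_ne_intCast r) r k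

open Polynomial in
/-- Fix positive integers `r`, `k`. Define `c : ℕ → ℚ[β]` by `c 0 = 1`, `c 1 = r` and
`(n+2)·c (n+2) + (n+1−r)·c (n+1) + (n+1−2r)·((1−β)/4)·c n = 0` for all `n ≥ 0`.
Let `P_k(1,β,0)` be the determinant of the `k×k` matrix with `(i,j)` entry (1-based)
`c (k+2r−1+j−i)`. Then `P_k(1,β,0)` has degree exactly `k(k+2r−1)/2`. -/
theorem stmt_8 (r : ℕ) (hr : 1 ≤ r) (k : ℕ) (hk : 1 ≤ k) (c : ℕ → Polynomial ℚ)
    (h0 : c 0 = 1) (h1 : c 1 = C (r : ℚ))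
    (hrec : ∀ n : ℕ,
      C ((n : ℚ) + 2) * c (n + 2) + C ((n : ℚ) + 1 - r) * c (n + 1)
        + C (((n : ℚ) + 1 - 2 * r) / 4) * (1 - X) * c n = 0) :
    (Matrix.det (Matrix.of fun i j : Fin k =>
        c (k + 2 * r - 1 + j.val - i.val))).degree =
      ((k * (k + 2 * r - 1) / 2 : ℕ) : WithBot ℕ) :=
  stmt_8_general r k c h0 h1 hrec
end

section
/- The polynomial P_k ∈ ℚ[α,β,γ] is weighted-homogeneous of degree 2k(k+2r−1) for the weights 2, 4, 6 on α, β, γ: every monomial α^a·β^b·γ^c occurring in P_k with nonzero coefficient satisfies 2a + 4b + 6c = 2k(k+2r−1). -/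
/-!
With weights 2, 4, 6 on α, β, γ the recurrence is weighted homogeneous: the coefficient of
`c (n + 4 - j)` has weight `2 j`, and the leading coefficient `n + 4` is a nonzero constant.
By induction `c n` is weighted homogeneous of degree `2 n`. The `(i, j)` entry of the matrix then
has degree `2 (k + 2r - 1 - i) + 2 j`, a row weight plus a column weight, so every term of the
Leibniz expansion of the determinant has degree `2 k (k + 2r - 1)`.
-/

open MvPolynomial

namespace MvPolynomial.IsWeightedHomogeneous

variable {σ R M : Type*} [CommSemiring R] [AddCommMonoid M] {w : σ → M} {φ : MvPolynomial σ R}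
  {m : M}

theorem of_C_mul [NoZeroDivisors R] {r : R} (hr : r ≠ 0)
    (h : IsWeightedHomogeneous w (C r * φ) m) : IsWeightedHomogeneous w φ m :=
  fun d hd => h (by rw [coeff_C_mul]; exact mul_ne_zero hr hd)

theorem mul_of_add_eq {ψ : MvPolynomial σ R} {n p : M} (hφ : IsWeightedHomogeneous w φ m)
    (hψ : IsWeightedHomogeneous w ψ n) (h : m + n = p) : IsWeightedHomogeneous w (φ * ψ) p :=
  h ▸ hφ.mul hψ

end MvPolynomial.IsWeightedHomogeneous

theorem Matrix.isWeightedHomogeneous_det {n σ R M : Type*} [Fintype n] [DecidableEq n]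
    [CommRing R] [AddCommMonoid M] {w : σ → M} (A : Matrix n n (MvPolynomial σ R))
    (u v : n → M) (h : ∀ i j, (A i j).IsWeightedHomogeneous w (u i + v j)) :
    A.det.IsWeightedHomogeneous w (∑ i, u i + ∑ j, v j) := by
  rw [Matrix.det_apply]
  refine IsWeightedHomogeneous.sum _ _ _ fun τ _ => ?_
  have hprod := IsWeightedHomogeneous.prod Finset.univ (fun i => A (τ i) i)
    (fun i => u (τ i) + v i) fun i _ => h (τ i) i
  rw [Finset.sum_add_distrib, Equiv.sum_comp τ u] at hprod
  rw [Units.smul_def]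
  exact zsmul_mem (show _ ∈ weightedHomogeneousSubmodule R w _ from hprod) _

def wt : Fin 3 → ℤ := ![2, 4, 6]

theorem weight_wt (m : Fin 3 →₀ ℕ) :
    Finsupp.weight wt m = 2 * m 0 + 4 * m 1 + 6 * m 2 := by
  simp [Finsupp.weight_apply, Finsupp.sum_fintype, Fin.sum_univ_three, wt]
  ring

section

variable {R : Type*} [CommRing R]

theorem isWeightedHomogeneous_X0 : (X 0 : MvPolynomial (Fin 3) R).IsWeightedHomogeneous wt 2 :=
  isWeightedHomogeneous_X R wt 0

theorem isWeightedHomogeneous_X2 : (X 2 : MvPolynomial (Fin 3) R).IsWeightedHomogeneous wt 6 :=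
  isWeightedHomogeneous_X R wt 2

theorem isWeightedHomogeneous_X0_sq_sub_X1 :
    ((X 0 : MvPolynomial (Fin 3) R) ^ 2 - X 1).IsWeightedHomogeneous wt 4 :=
  (isWeightedHomogeneous_X0.pow 2).sub (isWeightedHomogeneous_X R wt 1)

end

noncomputable def recurrenceTail (r : ℕ) (c : ℤ → MvPolynomial (Fin 3) ℚ) (n : ℤ) :
    MvPolynomial (Fin 3) ℚ :=
  C (2 * (n : ℚ) + 6 - r) * X 0 * c (n + 3)
    + (C ((n : ℚ) + 2 - r) * (X 0) ^ 2
        + C ((2 * (n : ℚ) + 5 - 2 * r) / 4) * ((X 0) ^ 2 - X 1)) * c (n + 2)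
    + (C ((2 * (n : ℚ) + 3 - 3 * r) / 4) * X 0 * ((X 0) ^ 2 - X 1)
        + C (1 / 2 : ℚ) * X 2) * c (n + 1)
    + C (((n : ℚ) + 1 - 2 * r) / 16) * ((X 0) ^ 2 - X 1) ^ 2 * c n

theorem isWeightedHomogeneous_recurrenceTail (r : ℕ) {c : ℤ → MvPolynomial (Fin 3) ℚ} {n : ℤ}
    (hc : ∀ j ≤ n + 3, (c j).IsWeightedHomogeneous wt (2 * j)) :
    (recurrenceTail r c n).IsWeightedHomogeneous wt (2 * (n + 4)) := by
  have hα := isWeightedHomogeneous_X0 (R := ℚ)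
  have hδ := isWeightedHomogeneous_X0_sq_sub_X1 (R := ℚ)
  refine ((IsWeightedHomogeneous.add ?_ ?_).add ?_).add ?_
  · exact (hα.C_mul _).mul_of_add_eq (hc (n + 3) le_rfl) (by ring)
  · exact (((hα.pow 2).C_mul _).add (hδ.C_mul _)).mul_of_add_eq (hc (n + 2) (by omega))
      (by ring)
  · exact (((hα.C_mul _).mul hδ).add (isWeightedHomogeneous_X2.C_mul _)).mul_of_add_eq
      (hc (n + 1) (by omega)) (by ring)
  · exact ((hδ.pow 2).C_mul _).mul_of_add_eq (hc n (by omega)) (by ring)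

theorem isWeightedHomogeneous_of_recurrence (r : ℕ) {c : ℤ → MvPolynomial (Fin 3) ℚ}
    (hneg : ∀ n : ℤ, n < 0 → c n = 0) (h0 : c 0 = 1)
    (hrec : ∀ n : ℤ, -3 ≤ n → C ((n : ℚ) + 4) * c (n + 4) + recurrenceTail r c n = 0) (n : ℤ) :
    (c n).IsWeightedHomogeneous wt (2 * n) := by
  suffices ∀ N : ℤ, -1 ≤ N → ∀ j ≤ N, (c j).IsWeightedHomogeneous wt (2 * j) from
    this (max n (-1)) (le_max_right _ _) n (le_max_left _ _)
  intro N hN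
  induction N, hN using Int.leInduction with
  | base => intro j hj; rw [hneg j (by omega)]; exact isWeightedHomogeneous_zero ℚ wt _
  | succ N hN ih =>
    intro j hj
    obtain hj | rfl := hj.lt_or_eq
    · exact ih j (by omega)
    obtain rfl | hN := hN.eq_or_lt
    · simpa [h0] using isWeightedHomogeneous_one ℚ wt
    obtain ⟨m, rfl⟩ : ∃ m, N = m + 3 := ⟨N - 3, by ring⟩
    rw [show m + 3 + 1 = m + 4 by ring]
    have hlead := eq_neg_of_add_eq_zero_left (hrec m (by omega))
    refine .of_C_mul (r := (m : ℚ) + 4) (by norm_cast; omega) ?_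
    rw [hlead]
    exact (isWeightedHomogeneous_recurrenceTail r ih).neg

open MvPolynomial in
theorem stmt_9_general (r k : ℕ)
    (c : ℤ → MvPolynomial (Fin 3) ℚ)
    (hneg : ∀ n : ℤ, n < 0 → c n = 0) (h0 : c 0 = 1)
    (hrec : ∀ n : ℤ, -3 ≤ n →
      C ((n : ℚ) + 4) * c (n + 4)
      + C (2 * (n : ℚ) + 6 - r) * X 0 * c (n + 3)
      + (C ((n : ℚ) + 2 - r) * (X 0) ^ 2
          + C ((2 * (n : ℚ) + 5 - 2 * r) / 4) * ((X 0) ^ 2 - X 1)) * c (n + 2)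
      + (C ((2 * (n : ℚ) + 3 - 3 * r) / 4) * X 0 * ((X 0) ^ 2 - X 1)
          + C (1 / 2 : ℚ) * X 2) * c (n + 1)
      + C (((n : ℚ) + 1 - 2 * r) / 16) * ((X 0) ^ 2 - X 1) ^ 2 * c n = 0) :
    ∀ m : Fin 3 →₀ ℕ,
      MvPolynomial.coeff m
        (Matrix.det (Matrix.of fun i j : Fin k =>
          c ((k : ℤ) + 2 * r - 1 + j.val - i.val))) ≠ 0 →
      2 * m 0 + 4 * m 1 + 6 * m 2 = 2 * k * (k + 2 * r - 1) := by
  intro m hm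
  have hc := isWeightedHomogeneous_of_recurrence r hneg h0 fun n hn => by
    rw [recurrenceTail]; linear_combination hrec n hn
  set D : ℤ := k + 2 * r - 1
  have hdet := Matrix.isWeightedHomogeneous_det (Matrix.of fun i j : Fin k => c (D + j - i))
    (fun i => 2 * (D - i)) (fun j => 2 * (j : ℤ)) fun i j => by
      rw [Matrix.of_apply, show 2 * (D - i) + 2 * (j : ℤ) = 2 * (D + j - i) by ring]
      exact hc _
  have hdeg : ∑ i : Fin k, 2 * (D - i) + ∑ j : Fin k, 2 * (j : ℤ) = 2 * k * D := by
    simp only [mul_sub, Finset.sum_sub_distrib, Finset.sum_const, Finset.card_univ,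
      Fintype.card_fin, nsmul_eq_mul]
    ring
  have hweight := hdet hm
  rw [weight_wt, hdeg] at hweight
  rcases k.eq_zero_or_pos with rfl | hk
  · simp at hweight ⊢; omega
  · zify [show 1 ≤ k + 2 * r by omega]; linear_combination hweight

open MvPolynomial in
/-- Fix positive integers `r`, `k`. In `ℚ[α,β,γ]` (with `α = X 0`, `β = X 1`, `γ = X 2`),
define `c : ℤ → ℚ[α,β,γ]` by `c n = 0` for `n < 0`, `c 0 = 1`, and the recurrence
`(n+4)·c(n+4) + (2n+6−r)·α·c(n+3) + ((n+2−r)·α² + (2n+5−2r)·(α²−β)/4)·c(n+2)`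
`+ ((2n+3−3r)·α·(α²−β)/4 + γ/2)·c(n+1) + (1/16)·(α²−β)²·(n+1−2r)·c(n) = 0` for `n ≥ −3`.
Let `P_k` be the determinant of the `k×k` matrix with `(i,j)` entry (1-based)
`c (k+2r−1+j−i)`. Then every monomial `α^a β^b γ^c` occurring in `P_k` with nonzero
coefficient satisfies `2a + 4b + 6c = 2k(k+2r−1)`. -/
theorem stmt_9 (r k : ℕ) (hr : 1 ≤ r) (hk : 1 ≤ k)
    (c : ℤ → MvPolynomial (Fin 3) ℚ)
    (hneg : ∀ n : ℤ, n < 0 → c n = 0) (h0 : c 0 = 1)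
    (hrec : ∀ n : ℤ, -3 ≤ n →
      C ((n : ℚ) + 4) * c (n + 4)
      + C (2 * (n : ℚ) + 6 - r) * X 0 * c (n + 3)
      + (C ((n : ℚ) + 2 - r) * (X 0) ^ 2
          + C ((2 * (n : ℚ) + 5 - 2 * r) / 4) * ((X 0) ^ 2 - X 1)) * c (n + 2)
      + (C ((2 * (n : ℚ) + 3 - 3 * r) / 4) * X 0 * ((X 0) ^ 2 - X 1)
          + C (1 / 2 : ℚ) * X 2) * c (n + 1)
      + C (((n : ℚ) + 1 - 2 * r) / 16) * ((X 0) ^ 2 - X 1) ^ 2 * c n = 0) :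
    ∀ m : Fin 3 →₀ ℕ,
      MvPolynomial.coeff m
        (Matrix.det (Matrix.of fun i j : Fin k =>
          c ((k : ℤ) + 2 * r - 1 + j.val - i.val))) ≠ 0 →
      2 * m 0 + 4 * m 1 + 6 * m 2 = 2 * k * (k + 2 * r - 1) :=
  stmt_9_general r k c hneg h0 hrec
end

section
/- In the polynomial ring ℤ[b] one has the identity c̃(2r,r,b) = ∏_{j=1}^{r} ((2j−1)²·b − j(j−1)). -/
/-!
Write `c̃ r n` for the sequence with parameter `r`. Induction on `n` shows that
`c̃ (r+1) (n+2) = (r+1) c̃ r (n+1) + (2r+1)(n+1) b c̃ r n`, since both sides obey the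
recurrence of `c̃ (r+1)`. At `n = 2r` the recurrence gives `c̃ r (2r+1) = -r c̃ r (2r)`,
because the coefficient `2r+1-n` of `b` vanishes at `n = 2r+1`. Substituting, the
diagonal satisfies `c̃ (r+1) (2r+2) = ((2r+1)² b - (r+1) r) c̃ r (2r)`, and the product
formula follows by induction on `r`.
-/

open Polynomial

noncomputable def cTilde (r : ℕ) : ℕ → ℤ[X]
  | 0 => 1
  | 1 => C (r : ℤ)
  | n + 2 => C ((r : ℤ) + 1 - (n + 2)) * cTilde r (n + 1)
      + X * C ((2 * (r : ℤ) + 1 - (n + 2)) * (n + 1)) * cTilde r n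

namespace cTilde

@[simp] lemma zero (r : ℕ) : cTilde r 0 = 1 := rfl

@[simp] lemma one (r : ℕ) : cTilde r 1 = C (r : ℤ) := rfl

lemma add_two (r n : ℕ) : cTilde r (n + 2) =
    C ((r : ℤ) + 1 - (n + 2)) * cTilde r (n + 1)
      + X * C ((2 * (r : ℤ) + 1 - (n + 2)) * (n + 1)) * cTilde r n := rfl

lemma succ_add_two (r n : ℕ) : cTilde (r + 1) (n + 2) =
    C ((r : ℤ) + 1) * cTilde r (n + 1)
      + X * C ((2 * (r : ℤ) + 1) * (n + 1)) * cTilde r n := by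
  induction n using Nat.twoStepInduction with
  | zero | one =>
    simp only [cTilde]
    push_cast
    simp only [map_add, map_sub, map_mul, map_one, map_ofNat, map_natCast]
    ring
  | more n ih ih' =>
    rw [add_two (r + 1) (n + 2), ih, ih', add_two r (n + 1), add_two r n]
    push_cast
    simp only [map_add, map_sub, map_mul, map_one, map_ofNat, map_natCast]
    ring

lemma two_mul_add_one (r : ℕ) : cTilde r (2 * r + 1) = -C (r : ℤ) * cTilde r (2 * r) := by
  cases r with
  | zero => simp
  | succ k =>
    rw [show 2 * (k + 1) + 1 = (2 * k + 1) + 2 by ring, add_two,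
      show 2 * k + 1 + 1 = 2 * (k + 1) by ring]
    push_cast
    simp only [map_add, map_sub, map_mul, map_one, map_ofNat, map_natCast]
    ring

lemma two_mul_succ (r : ℕ) : cTilde (r + 1) (2 * (r + 1)) =
    (C ((2 * (r : ℤ) + 1) ^ 2) * X - C (((r : ℤ) + 1) * r)) * cTilde r (2 * r) := by
  rw [show 2 * (r + 1) = 2 * r + 2 by ring, succ_add_two, two_mul_add_one]
  push_cast
  simp only [map_add, map_mul, map_one, map_ofNat, map_natCast, map_pow]
  ring

lemma two_mul (r : ℕ) : cTilde r (2 * r) =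
    ∏ j ∈ Finset.range r, (C ((2 * (j : ℤ) + 1) ^ 2) * X - C (((j : ℤ) + 1) * j)) := by
  induction r with
  | zero => simp
  | succ r ih => rw [two_mul_succ, ih, Finset.prod_range_succ, mul_comm]

end cTilde

theorem stmt_11_general (r : ℕ) (c : ℕ → Polynomial ℤ)
    (h0 : c 0 = 1) (h1 : c 1 = C (r : ℤ))
    (hrec : ∀ n : ℕ, 2 ≤ n →
      c n = C ((r : ℤ) + 1 - n) * c (n - 1)
        + X * C ((2 * (r : ℤ) + 1 - n) * ((n : ℤ) - 1)) * c (n - 2)) :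
    c (2 * r) = ∏ j ∈ Finset.range r,
      (C ((2 * (j : ℤ) + 1) ^ 2) * X - C (((j : ℤ) + 1) * (j : ℤ))) := by
  have hc : ∀ n, c n = cTilde r n := by
    intro n
    induction n using Nat.twoStepInduction with
    | zero => exact h0
    | one => exact h1
    | more n ih ih' =>
      rw [hrec (n + 2) (by omega), Nat.add_sub_cancel, Nat.add_sub_assoc (by omega),
        ih, ih', cTilde.add_two]
      push_cast
      ring_nf
  rw [hc, cTilde.two_mul]

open Polynomial in
/-- Fix a positive integer `r`. Define `c̃(n,r,b) ∈ ℤ[b]` by `c̃(0,r,b) = 1`,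
`c̃(1,r,b) = r` and `c̃(n,r,b) = (r+1−n)·c̃(n−1,r,b) + b·(2r+1−n)·(n−1)·c̃(n−2,r,b)`
for `n ≥ 2`. Then `c̃(2r,r,b) = ∏_{j=1}^{r} ((2j−1)²·b − j(j−1))` in `ℤ[b]`. -/
theorem stmt_11 (r : ℕ) (hr : 1 ≤ r) (c : ℕ → Polynomial ℤ)
    (h0 : c 0 = 1) (h1 : c 1 = C (r : ℤ))
    (hrec : ∀ n : ℕ, 2 ≤ n →
      c n = C ((r : ℤ) + 1 - n) * c (n - 1)
        + X * C ((2 * (r : ℤ) + 1 - n) * ((n : ℤ) - 1)) * c (n - 2)) :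
    c (2 * r) = ∏ j ∈ Finset.range r,
      (C ((2 * (j : ℤ) + 1) ^ 2) * X - C (((j : ℤ) + 1) * (j : ℤ))) :=
  stmt_11_general r c h0 h1 hrec
end

section
/- For every integer n ≥ 0 one has the identity in ℚ[β]: n!·c_n equals the polynomial obtained from c̃(n,r,b) by substituting b = (1−β)/4. -/
/-!
Both `n! • cₙ` and `c̃ₙ((1 - β)/4)` start with `1, r` and satisfy the same three-term recurrence
`uₙ₊₂ = (r - 1 - n) uₙ₊₁ + ((1 - β)/4) (2r - 1 - n) (n + 1) uₙ`: for the first sequence this is the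
recurrence of `c` multiplied by `(n + 1)!`, for the second it is the recurrence of `c̃` at `n + 2`.
-/

open Polynomial

theorem eq_of_two_step_recurrence {α : Type*} {f g : ℕ → α} (step : ℕ → α → α → α)
    (h0 : f 0 = g 0) (h1 : f 1 = g 1)
    (hf : ∀ n, f (n + 2) = step n (f n) (f (n + 1)))
    (hg : ∀ n, g (n + 2) = step n (g n) (g (n + 1))) : f = g := by
  funext n
  induction n using Nat.twoStepInduction with
  | zero => exact h0
  | one => exact h1
  | more n ih₀ ih₁ => rw [hf, hg, ih₀, ih₁]

/-- `uₙ₊₂` in terms of `x = uₙ` and `y = uₙ₊₁`; `b` is the value substituted for the variable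
of `c̃`. -/
noncomputable def recurrenceStep (b : ℚ[X]) (r n : ℕ) (x y : ℚ[X]) : ℚ[X] :=
  C ((r : ℚ) - 1 - n) * y + b * C ((2 * r - 1 - n) * (n + 1) : ℚ) * x

theorem factorial_mul_succ_succ_of_recurrence {r : ℕ} {c : ℕ → ℚ[X]}
    (hcrec : ∀ n : ℕ,
      C ((n : ℚ) + 2) * c (n + 2) + C ((n : ℚ) + 1 - r) * c (n + 1)
        + C (((n : ℚ) + 1 - 2 * r) / 4) * (1 - X) * c n = 0) (n : ℕ) :
    C ((n + 2).factorial : ℚ) * c (n + 2) =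
      recurrenceStep (C (1 / 4 : ℚ) * (1 - X)) r n (C (n.factorial : ℚ) * c n)
        (C ((n + 1).factorial : ℚ) * c (n + 1)) := by
  have h := hcrec n
  rw [div_eq_mul_one_div, C_mul] at h
  simp only [recurrenceStep, Nat.factorial_succ]
  push_cast
  simp only [map_add, map_sub, map_mul, map_natCast, map_ofNat, map_one] at h ⊢
  linear_combination ((n + 1 : ℚ[X]) * n.factorial) * h

theorem aeval_succ_succ_of_recurrence (b : ℚ[X]) {r : ℕ} {ct : ℕ → ℤ[X]}
    (hctrec : ∀ n : ℕ, 2 ≤ n →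
      ct n = C ((r : ℤ) + 1 - n) * ct (n - 1)
        + X * C ((2 * (r : ℤ) + 1 - n) * ((n : ℤ) - 1)) * ct (n - 2)) (n : ℕ) :
    aeval b (ct (n + 2)) = recurrenceStep b r n (aeval b (ct n)) (aeval b (ct (n + 1))) := by
  rw [hctrec (n + 2) (by omega), Nat.add_sub_cancel, show n + 2 - 1 = n + 1 from rfl]
  simp only [recurrenceStep, map_add, map_sub, map_mul, map_natCast, map_ofNat, map_one, aeval_X]
  push_cast
  ring

theorem stmt_12_general (r : ℕ)
    (c : ℕ → Polynomial ℚ)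
    (hc0 : c 0 = 1) (hc1 : c 1 = C (r : ℚ))
    (hcrec : ∀ n : ℕ,
      C ((n : ℚ) + 2) * c (n + 2) + C ((n : ℚ) + 1 - r) * c (n + 1)
        + C (((n : ℚ) + 1 - 2 * r) / 4) * (1 - X) * c n = 0)
    (ct : ℕ → Polynomial ℤ)
    (hct0 : ct 0 = 1) (hct1 : ct 1 = C (r : ℤ))
    (hctrec : ∀ n : ℕ, 2 ≤ n →
      ct n = C ((r : ℤ) + 1 - n) * ct (n - 1)
        + X * C ((2 * (r : ℤ) + 1 - n) * ((n : ℤ) - 1)) * ct (n - 2)) :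
    ∀ n : ℕ, C ((Nat.factorial n : ℚ)) * c n =
      Polynomial.aeval (C (1 / 4 : ℚ) * (1 - X)) (ct n) :=
  congrFun <| eq_of_two_step_recurrence (recurrenceStep (C (1 / 4 : ℚ) * (1 - X)) r)
    (by simp [hc0, hct0]) (by simp [hc1, hct1])
    (factorial_mul_succ_succ_of_recurrence hcrec)
    (aeval_succ_succ_of_recurrence _ hctrec)

open Polynomial in
/-- Fix a positive integer `r`. Let `c : ℕ → ℚ[β]` satisfy `c 0 = 1`, `c 1 = r` and
`(n+2)·c (n+2) + (n+1−r)·c (n+1) + (n+1−2r)·((1−β)/4)·c n = 0` for all `n ≥ 0`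
(the sequence `c_n(1,β,0)` of the paper). Let `c̃ : ℕ → ℤ[b]` satisfy `c̃ 0 = 1`,
`c̃ 1 = r` and `c̃ n = (r+1−n)·c̃ (n−1) + b·(2r+1−n)·(n−1)·c̃ (n−2)` for `n ≥ 2`.
Then for all `n ≥ 0`, `n!·c n` equals `c̃ n` with `b` substituted by `(1−β)/4`. -/
theorem stmt_12 (r : ℕ) (hr : 1 ≤ r)
    (c : ℕ → Polynomial ℚ)
    (hc0 : c 0 = 1) (hc1 : c 1 = C (r : ℚ))
    (hcrec : ∀ n : ℕ,
      C ((n : ℚ) + 2) * c (n + 2) + C ((n : ℚ) + 1 - r) * c (n + 1)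
        + C (((n : ℚ) + 1 - 2 * r) / 4) * (1 - X) * c n = 0)
    (ct : ℕ → Polynomial ℤ)
    (hct0 : ct 0 = 1) (hct1 : ct 1 = C (r : ℤ))
    (hctrec : ∀ n : ℕ, 2 ≤ n →
      ct n = C ((r : ℤ) + 1 - n) * ct (n - 1)
        + X * C ((2 * (r : ℤ) + 1 - n) * ((n : ℤ) - 1)) * ct (n - 2)) :
    ∀ n : ℕ, C ((Nat.factorial n : ℚ)) * c n =
      Polynomial.aeval (C (1 / 4 : ℚ) * (1 - X)) (ct n) :=
  stmt_12_general r c hc0 hc1 hcrec ct hct0 hct1 hctrec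
end

section
/- Let n ≥ 1 be an integer and s ∈ ℚ. Let A_n be the n×n matrix over ℚ with (A_n)_{i,i} = i for 1 ≤ i ≤ n, (A_n)_{i,i−1} = i−1 for 2 ≤ i ≤ n, and all other entries 0; let B_n be the n×n matrix over ℚ with (B_n)_{i,i} = 2i for 1 ≤ i ≤ n, (B_n)_{i,i−1} = i−1 for 2 ≤ i ≤ n, (B_n)_{i,i+1} = −(n−i) for 1 ≤ i ≤ n−1, and all other entries 0. Then the characteristic polynomial of C_n(s) := (n+1)·A_n + s·B_n equals ∏_{k=1}^{n} (X − (s+k)·(n+1)) in ℚ[X]. -/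
/-- The `n×n` matrix `A_n` over `ℚ` with (1-based) diagonal entries `(A_n)_{i,i} = i`
and subdiagonal entries `(A_n)_{i,i−1} = i−1`. -/
def An (n : ℕ) : Matrix (Fin n) (Fin n) ℚ :=
  Matrix.of fun i j =>
    if i = j then (i.val : ℚ) + 1
    else if j.val + 1 = i.val then (i.val : ℚ)
    else 0

/-- The `n×n` matrix `B_n` over `ℚ` with (1-based) diagonal entries `2i`,
subdiagonal entries `i−1` and superdiagonal entries `−(n−i)`. -/
def Bn (n : ℕ) : Matrix (Fin n) (Fin n) ℚ :=
  Matrix.of fun i j =>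
    if i = j then 2 * ((i.val : ℚ) + 1)
    else if j.val + 1 = i.val then (i.val : ℚ)
    else if i.val + 1 = j.val then -((n : ℚ) - ((i.val : ℚ) + 1))
    else 0

/-!
Let `Q` be the lower triangular matrix with entries `(-1)^(i+j) i!/(i-j)!` (indices from `0`).
Its columns are eigenvectors of `A_n`, i.e. `A_n Q = Q · diag(1, …, n)`, and it conjugates `B_n`
to the upper bidiagonal matrix with diagonal `n + 1` and superdiagonal entries `-(n-j)j`. Entrywise
both are three-term identities for falling factorials, which follow from
`i!/(i-j-1)! = (i-j) · i!/(i-j)!` and `(i+1)!/(i-j)! = (i+1) · i!/(i-j)!`. Hence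
`Q⁻¹ C_n(s) Q` is upper triangular with diagonal entries `(s + j + 1)(n + 1)`.
-/

open Matrix Polynomial Finset

theorem Matrix.charpoly_eq_of_mul_eq_mul {ι R : Type*} [Fintype ι] [DecidableEq ι] [CommRing R]
    {M P T : Matrix ι ι R} (hP : IsUnit P.det) (h : M * P = P * T) :
    M.charpoly = T.charpoly := by
  have hM : M = P * T * P⁻¹ := by
    rw [← h, Matrix.mul_assoc, mul_nonsing_inv _ hP, Matrix.mul_one]
  rw [hM, charpoly_mul_comm, ← Matrix.mul_assoc, nonsing_inv_mul _ hP, Matrix.one_mul]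

theorem Nat.cast_descFactorial_succ {R : Type*} [Ring R] (i j : ℕ) :
    (i.descFactorial (j + 1) : R) = i.descFactorial j * (i - j) := by
  rw [← descPochhammer_eval_eq_descFactorial, ← descPochhammer_eval_eq_descFactorial,
    descPochhammer_succ_eval]

theorem Fin.sum_univ_ite_val_eq {R : Type*} [AddCommMonoid R] {n : ℕ} (m : ℕ)
    (f : Fin n → R) :
    ∑ k : Fin n, (if (k : ℕ) = m then f k else 0) = if h : m < n then f ⟨m, h⟩ else 0 := by
  split_ifs with h
  · simp only [← Fin.ext_iff (b := ⟨m, h⟩), sum_ite_eq', mem_univ, if_true]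
  · exact sum_eq_zero fun k _ => if_neg (by omega)

def signedDescFactorial (i j : ℕ) : ℚ := (-1) ^ (i + j) * i.descFactorial j

def descFactorialMatrix (n : ℕ) : Matrix (Fin n) (Fin n) ℚ :=
  of fun i j => signedDescFactorial i j

def triangularBn (n : ℕ) : Matrix (Fin n) (Fin n) ℚ :=
  of fun i j =>
    if i = j then (n : ℚ) + 1
    else if i.val + 1 = j.val then -(((n : ℚ) - j) * j)
    else 0

section Entries

/- In these expansions the term at the truncated index `i - 1` (resp. `j - 1`) is harmless for
`i = 0` (resp. `j = 0`), since its coefficient vanishes there. -/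

variable {n : ℕ} (i j k : Fin n)

theorem An_apply_eq :
    An n i k = (if (k : ℕ) = i then (i : ℚ) + 1 else 0)
      + (if (k : ℕ) = i - 1 then (i : ℚ) else 0) := by
  simp only [An, of_apply, Fin.ext_iff]
  split_ifs <;> first | omega | simp [show (i : ℕ) = 0 by omega] | simp

theorem Bn_apply_eq :
    Bn n i k = (if (k : ℕ) = i then 2 * ((i : ℚ) + 1) else 0)
      + (if (k : ℕ) = i - 1 then (i : ℚ) else 0)
      + (if (k : ℕ) = i + 1 then -((n : ℚ) - (i + 1)) else 0) := by
  simp only [Bn, of_apply, Fin.ext_iff]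
  split_ifs <;> first | omega | simp [show (i : ℕ) = 0 by omega] | simp

theorem triangularBn_apply_eq :
    triangularBn n k j = (if (k : ℕ) = j then (n : ℚ) + 1 else 0)
      + (if (k : ℕ) = j - 1 then -(((n : ℚ) - j) * j) else 0) := by
  simp only [triangularBn, of_apply, Fin.ext_iff]
  split_ifs <;> first | omega | simp [show (j : ℕ) = 0 by omega] | simp

end Entries

section Products

variable {n : ℕ} (g : ℕ → ℕ → ℚ) (i j : Fin n)

theorem An_mul_of_apply :
    (An n * of fun k l : Fin n => g k l) i j = ((i : ℚ) + 1) * g i j + i * g (i - 1) j := by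
  simp only [mul_apply, An_apply_eq, of_apply, add_mul, ite_mul, zero_mul, sum_add_distrib,
    Fin.sum_univ_ite_val_eq, dif_pos i.isLt, dif_pos (show (i : ℕ) - 1 < n by omega)]

theorem Bn_mul_of_apply :
    (Bn n * of fun k l : Fin n => g k l) i j =
      2 * ((i : ℚ) + 1) * g i j + i * g (i - 1) j - ((n : ℚ) - (i + 1)) * g (i + 1) j := by
  simp only [mul_apply, Bn_apply_eq, of_apply, add_mul, ite_mul, zero_mul, sum_add_distrib,
    Fin.sum_univ_ite_val_eq, dif_pos i.isLt, dif_pos (show (i : ℕ) - 1 < n by omega)]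
  split_ifs with h
  · ring
  · rw [show (n : ℚ) = i + 1 by exact_mod_cast (show n = i + 1 by omega)]
    ring

theorem of_mul_triangularBn_apply :
    ((of fun k l : Fin n => g k l) * triangularBn n) i j =
      ((n : ℚ) + 1) * g i j - ((n : ℚ) - j) * j * g i (j - 1) := by
  simp only [mul_apply, triangularBn_apply_eq, of_apply, mul_add, mul_ite, mul_zero,
    sum_add_distrib, Fin.sum_univ_ite_val_eq, dif_pos j.isLt,
    dif_pos (show (j : ℕ) - 1 < n by omega)]
  ring

end Products

section SignedDescFactorial

variable (i j : ℕ)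

theorem signedDescFactorial_succ_succ :
    signedDescFactorial (i + 1) (j + 1) = ((i : ℚ) + 1) * signedDescFactorial i j := by
  simp only [signedDescFactorial, Nat.succ_descFactorial_succ]
  push_cast
  ring

theorem signedDescFactorial_succ_right :
    signedDescFactorial i (j + 1) = ((j : ℚ) - i) * signedDescFactorial i j := by
  simp only [signedDescFactorial, Nat.cast_descFactorial_succ, ← add_assoc, pow_succ]
  ring

theorem signedDescFactorial_zero_succ : signedDescFactorial 0 (j + 1) = 0 := by
  simp [signedDescFactorial]

theorem signedDescFactorial_zero_right : signedDescFactorial i 0 = (-1) ^ i := by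
  simp [signedDescFactorial]

end SignedDescFactorial

theorem An_mul_descFactorialMatrix (n : ℕ) :
    An n * descFactorialMatrix n =
      descFactorialMatrix n * diagonal fun j : Fin n => (j : ℚ) + 1 := by
  ext ⟨i, hi⟩ ⟨j, hj⟩
  rw [descFactorialMatrix, An_mul_of_apply, mul_diagonal, of_apply]
  rcases i with _ | i <;> rcases j with _ | j <;>
    simp only [Nat.add_sub_cancel, Nat.cast_add, Nat.cast_one, Nat.cast_zero]
  · ring
  · rw [signedDescFactorial_zero_succ]
    ring
  · simp only [signedDescFactorial_zero_right, pow_succ]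
    ring
  · linear_combination (norm := (push_cast; ring))
      ((i : ℚ) + 1) * signedDescFactorial_succ_right i j
      - ((j : ℚ) - i) * signedDescFactorial_succ_succ i j

theorem Bn_mul_descFactorialMatrix (n : ℕ) :
    Bn n * descFactorialMatrix n = descFactorialMatrix n * triangularBn n := by
  ext ⟨i, hi⟩ ⟨j, hj⟩
  rw [descFactorialMatrix, Bn_mul_of_apply, of_mul_triangularBn_apply]
  rcases i with _ | i <;> rcases j with _ | j <;>
    simp only [Nat.add_sub_cancel, Nat.cast_add, Nat.cast_one, Nat.cast_zero]
  · simp only [signedDescFactorial_zero_right, pow_succ]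
    ring
  · linear_combination -((n : ℚ) - 1) * signedDescFactorial_succ_succ 0 j
      - ((n : ℚ) - j - 2) * signedDescFactorial_succ_right 0 j
      - ((j : ℚ) + 1) * signedDescFactorial_zero_succ j
  · simp only [signedDescFactorial_zero_right, pow_succ]
    ring
  · linear_combination (norm := (push_cast; ring))
      ((i : ℚ) + 1) * signedDescFactorial_succ_right i j
      - ((j : ℚ) - i) * signedDescFactorial_succ_succ i j
      - ((n : ℚ) - i - 2) * signedDescFactorial_succ_succ (i + 1) j
      + ((i : ℚ) + j + 3 - n) * signedDescFactorial_succ_right (i + 1) j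

theorem descFactorialMatrix_isLowerTriangular (n : ℕ) :
    (descFactorialMatrix n).IsLowerTriangular := fun i j (hij : (i : ℕ) < j) => by
  simp [descFactorialMatrix, signedDescFactorial, Nat.descFactorial_eq_zero_iff_lt.mpr hij]

theorem isUnit_det_descFactorialMatrix (n : ℕ) : IsUnit (descFactorialMatrix n).det := by
  rw [det_of_isLowerTriangular _ (descFactorialMatrix_isLowerTriangular n), isUnit_iff_ne_zero,
    prod_ne_zero_iff]
  intro i _
  simp [descFactorialMatrix, signedDescFactorial, Nat.descFactorial_self, Nat.factorial_ne_zero]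

theorem stmt_15_general (n : ℕ) (s : ℚ) :
    Matrix.charpoly (((n : ℚ) + 1) • An n + s • Bn n) =
      ∏ k ∈ Finset.range n,
        (Polynomial.X - Polynomial.C ((s + ((k : ℚ) + 1)) * ((n : ℚ) + 1))) := by
  set T := ((n : ℚ) + 1) • diagonal (fun j : Fin n => (j : ℚ) + 1) + s • triangularBn n
  have hsimilar : (((n : ℚ) + 1) • An n + s • Bn n) * descFactorialMatrix n =
      descFactorialMatrix n * T := by
    simp only [T, Matrix.add_mul, Matrix.mul_add, Matrix.smul_mul, Matrix.mul_smul,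
      An_mul_descFactorialMatrix, Bn_mul_descFactorialMatrix]
  have hT : T.IsUpperTriangular := fun i j (hji : (j : ℕ) < i) => by
    simp [T, triangularBn, Fin.ext_iff, hji.ne', show (i : ℕ) + 1 ≠ j by omega]
  rw [charpoly_eq_of_mul_eq_mul (isUnit_det_descFactorialMatrix n) hsimilar,
    charpoly_of_isUpperTriangular T hT, ← Fin.prod_univ_eq_prod_range]
  refine prod_congr rfl fun j _ => ?_
  simp [T, triangularBn]
  ring

/-- Let `n ≥ 1` and `s ∈ ℚ`. The characteristic polynomial of
`C_n(s) := (n+1)·A_n + s·B_n` is `∏_{k=1}^{n} (X − (s+k)(n+1))`. -/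
theorem stmt_15 (n : ℕ) (hn : 1 ≤ n) (s : ℚ) :
    Matrix.charpoly (((n : ℚ) + 1) • An n + s • Bn n) =
      ∏ k ∈ Finset.range n,
        (Polynomial.X - Polynomial.C ((s + ((k : ℚ) + 1)) * ((n : ℚ) + 1))) :=
  stmt_15_general n s
end

section
/- Let n ≥ 2 be an even integer and a ∈ ℚ. Let L_n(a) be the n×n matrix over ℚ with (L_n(a))_{i,i} = i·a for 1 ≤ i ≤ n, (L_n(a))_{i,i−1} = i−1 for 2 ≤ i ≤ n, (L_n(a))_{i,i+1} = n−i for 1 ≤ i ≤ n−1, and all other entries 0. Then the characteristic polynomial of L_n(a) equals ∏_{i=1}^{n/2} ((X − i·a)·(X − (n+1−i)·a) − (n+1−2i)²) in ℚ[X]. -/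
/-!
Identify a row vector `v` of length `n` with the polynomial `∑ vᵢ Xⁱ` of degree `< n`. Then
`v ↦ v L_n(a)` becomes the first-order differential operator
`f ↦ ((n - 1) X + a) f - (X² - a X - 1) f'`. Over `ℝ` write `X² - a X - 1 = (X - α)(X - β)` with
`α ≠ β`, `αβ = -1`: for `p + q = n - 1` the logarithmic derivative of `(X - α)ᵖ (X - β)^q`
shows it is an eigenvector with eigenvalue `(q + 1) α + (p + 1) β`. These `n` eigenvalues are
distinct, so they are all the roots of the characteristic polynomial. The eigenvalues for `p` and
`n - 1 - p` have sum `(n + 1) a` and product `(p + 1)(n - p) a² - (n - 1 - 2p)²`, which gives the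
quadratic factors.
-/

open Polynomial Matrix Finset

/-- The `n×n` matrix `L_n(a)` over `ℚ` with (1-based) diagonal entries `i·a`,
subdiagonal entries `i−1` and superdiagonal entries `n−i`. -/
def Ln (n : ℕ) (a : ℚ) : Matrix (Fin n) (Fin n) ℚ :=
  Matrix.of fun i j =>
    if i = j then ((i.val : ℚ) + 1) * a
    else if j.val + 1 = i.val then (i.val : ℚ)
    else if i.val + 1 = j.val then (n : ℚ) - ((i.val : ℚ) + 1)
    else 0

lemma Finset.prod_range_add_self_eq_prod_mul_reflect {M : Type*} [CommMonoid M] (f : ℕ → M)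
    (m : ℕ) : ∏ i ∈ range (m + m), f i = ∏ i ∈ range m, f i * f (m + m - 1 - i) := by
  rw [prod_range_add, prod_mul_distrib, ← prod_range_reflect (fun i => f (m + i)) m]
  refine congrArg _ (prod_congr rfl fun i hi => congrArg f ?_)
  simp only [mem_range] at hi
  omega

lemma exists_add_eq_mul_eq_neg_one (a : ℝ) : ∃ α β : ℝ, α + β = a ∧ α * β = -1 ∧ α ≠ β := by
  have hpos : 0 < √(a ^ 2 + 4) := Real.sqrt_pos.mpr (by positivity)
  have hsq : √(a ^ 2 + 4) ^ 2 = a ^ 2 + 4 := Real.sq_sqrt (by positivity)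
  refine ⟨(a + √(a ^ 2 + 4)) / 2, (a - √(a ^ 2 + 4)) / 2, by ring,
    by linear_combination -hsq / 4, fun h => ?_⟩
  linarith

lemma Matrix.isRoot_charpoly_of_vecMul_eq_smul {ι R : Type*} [Fintype ι] [DecidableEq ι] [CommRing R]
    [IsDomain R] {M : Matrix ι ι R} {v : ι → R} {μ : R} (hv : v ≠ 0) (h : v ᵥ* M = μ • v) :
    M.charpoly.IsRoot μ := by
  rw [IsRoot, eval_charpoly, ← exists_vecMul_eq_zero_iff]
  refine ⟨v, hv, ?_⟩
  rw [vecMul_sub, h]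
  simp

namespace Polynomial

lemma eq_prod_X_sub_C_of_monic_of_isRoot {ι K : Type*} [Field K] {P : K[X]}
    (hP : P.Monic) {s : Finset ι} {r : ι → K} (hr : Set.InjOn r s)
    (hroot : ∀ i ∈ s, P.IsRoot (r i)) (hdeg : P.natDegree ≤ s.card) :
    P = ∏ i ∈ s, (X - C (r i)) := by
  have hmonic : ∀ i ∈ s, (X - C (r i)).Monic := fun i _ => monic_X_sub_C (r i)
  refine eq_of_monic_of_dvd_of_natDegree_le (monic_prod_of_monic _ _ hmonic) hP ?_ ?_
  · refine prod_dvd_of_coprime (fun i hi j hj hij => ?_) fun i hi => dvd_iff_isRoot.mpr (hroot i hi)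
    exact isCoprime_X_sub_C_of_isUnit_sub (sub_ne_zero.mpr fun h => hij (hr hi hj h)).isUnit
  · simpa [natDegree_prod_of_monic _ _ hmonic] using hdeg

variable {R : Type*} [CommRing R]

lemma X_sub_C_mul_X_sub_C_eq_of_add_eq_of_mul_eq {x y s t d : R}
    (hadd : x + y = s + t) (hmul : x * y = s * t - d) :
    (X - C x) * (X - C y) = (X - C s) * (X - C t) - C d := by
  have hadd' : C x + C y = C s + C t := by rw [← C_add, hadd, C_add]
  have hmul' : C x * C y = C s * C t - C d := by rw [← C_mul, hmul, C_sub, C_mul]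
  linear_combination (-X) * hadd' + hmul'

lemma X_sub_C_mul_derivative_X_sub_C_pow (α : R) (p : ℕ) :
    (X - C α) * derivative ((X - C α) ^ p) = (p : R[X]) * (X - C α) ^ p := by
  cases p with
  | zero => simp
  | succ p => rw [derivative_X_sub_C_pow, map_natCast]; push_cast; ring

lemma coeff_X_mul_derivative (f : R[X]) (j : ℕ) :
    (X * derivative f).coeff j = j * f.coeff j := by
  cases j <;> simp [coeff_X_mul, coeff_derivative, mul_comm]

lemma coeff_X_mul_X_mul_derivative (f : R[X]) (j : ℕ) :
    (X * (X * derivative f)).coeff j = ((j : R) - 1) * (X * f).coeff j := by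
  cases j <;> simp [coeff_X_mul, coeff_X_mul_derivative]

end Polynomial

def LnOver (R : Type*) [CommRing R] (n : ℕ) (a : R) : Matrix (Fin n) (Fin n) R :=
  Matrix.of fun i j =>
    if i = j then ((i.val : R) + 1) * a
    else if j.val + 1 = i.val then (i.val : R)
    else if i.val + 1 = j.val then (n : R) - ((i.val : R) + 1)
    else 0

lemma Ln_map_ratCast {K : Type*} [Field K] [CharZero K] (n : ℕ) (a : ℚ) :
    (Ln n a).map (Rat.castHom K) = LnOver K n a := by
  ext i j
  simp only [Ln, LnOver, map_apply, of_apply, apply_ite (Rat.castHom K)]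
  split_ifs <;> simp

section PolynomialModel

variable {R : Type*} [CommRing R]

noncomputable def LnOperator (n : ℕ) (a : R) (f : R[X]) : R[X] :=
  (C ((n : R) - 1) * X + C a) * f - (X ^ 2 - C a * X - 1) * derivative f

lemma coeff_LnOperator (n : ℕ) (a : R) (f : R[X]) (j : ℕ) :
    (LnOperator n a f).coeff j =
      (n - j) * (X * f).coeff j + (j + 1) * a * f.coeff j + (j + 1) * f.coeff (j + 1) := by
  have h : LnOperator n a f = C ((n : R) - 1) * (X * f) + C a * f - X * (X * derivative f)
      + C a * (X * derivative f) + derivative f := by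
    unfold LnOperator; ring
  rw [h]
  simp only [coeff_add, coeff_sub, coeff_C_mul, coeff_X_mul_X_mul_derivative,
    coeff_X_mul_derivative, coeff_derivative]
  ring

lemma vecMul_LnOver_apply {n : ℕ} (a : R) (f : R[X]) (hf : f.coeff n = 0) (j : Fin n) :
    ((fun i : Fin n => f.coeff i) ᵥ* LnOver R n a) j =
      ((n : R) - j) * (X * f).coeff j + ((j : R) + 1) * a * f.coeff j
        + ((j : R) + 1) * f.coeff (j + 1) := by
  obtain ⟨j, hj⟩ := j
  set A := ((n : R) - j) * (X * f).coeff j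
  set B := ((j : R) + 1) * a * f.coeff j
  set D := ((j : R) + 1) * f.coeff (j + 1)
  -- at `j = 0` the index `j - 1` truncates to `0`, which is harmless because then `A = 0`
  have hterm : ∀ i : Fin n, f.coeff i * LnOver R n a i ⟨j, hj⟩ =
      (if (i : ℕ) = j - 1 then A else 0) + (if (i : ℕ) = j then B else 0)
        + (if (i : ℕ) = j + 1 then D else 0) := by
    rintro ⟨i, hi⟩
    simp only [LnOver, of_apply, Fin.ext_iff, A, B, D]
    split_ifs <;> subst_vars <;> first | omega | skip
    all_goals
      try (have h0 : i = 0 := (by omega); subst h0)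
      push_cast
      simp [coeff_X_mul]
      try ring
  have hD : (if j + 1 < n then D else 0) = D := by
    split_ifs with h
    · rfl
    · simp only [D, show j + 1 = n by omega, hf, mul_zero]
  simp only [vecMul, dotProduct, hterm, Fin.sum_univ_eq_sum_range (fun i =>
      (if i = j - 1 then A else 0) + (if i = j then B else 0) + (if i = j + 1 then D else 0)),
    sum_add_distrib, sum_ite_eq', mem_range, hD, hj, show j - 1 < n by omega, if_true]

lemma vecMul_LnOver {n : ℕ} (a : R) (f : R[X]) (hf : f.coeff n = 0) :
    (fun i : Fin n => f.coeff i) ᵥ* LnOver R n a =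
      fun j : Fin n => (LnOperator n a f).coeff j := by
  ext j
  rw [vecMul_LnOver_apply a f hf, coeff_LnOperator]

lemma LnOperator_X_sub_C_pow_mul_X_sub_C_pow {α β : R} (hαβ : α * β = -1) (p q : ℕ) :
    LnOperator (p + q + 1) (α + β) ((X - C α) ^ p * (X - C β) ^ q) =
      C (((q : R) + 1) * α + ((p : R) + 1) * β) * ((X - C α) ^ p * (X - C β) ^ q) := by
  have hquad : (X ^ 2 - C (α + β) * X - 1 : R[X]) = (X - C α) * (X - C β) := by
    have : (C α * C β : R[X]) = -1 := by rw [← C_mul, hαβ, C_neg, C_1]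
    rw [C_add]
    linear_combination -this
  unfold LnOperator
  rw [hquad, derivative_mul]
  simp only [Nat.cast_add, Nat.cast_one, map_add, map_mul, map_sub, map_one, map_natCast]
  linear_combination (-(X - C β) * (X - C β) ^ q) * X_sub_C_mul_derivative_X_sub_C_pow α p
    - ((X - C α) * (X - C α) ^ p) * X_sub_C_mul_derivative_X_sub_C_pow β q

lemma isRoot_charpoly_LnOver [IsDomain R] {α β : R} (hαβ : α * β = -1) (p q : ℕ) :
    (LnOver R (p + q + 1) (α + β)).charpoly.IsRoot (((q : R) + 1) * α + ((p : R) + 1) * β) := by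
  set f := (X - C α) ^ p * (X - C β) ^ q
  have hmonic : f.Monic := ((monic_X_sub_C α).pow p).mul ((monic_X_sub_C β).pow q)
  have hdeg : f.natDegree = p + q := by
    rw [((monic_X_sub_C α).pow p).natDegree_mul ((monic_X_sub_C β).pow q)]
    simp
  refine isRoot_charpoly_of_vecMul_eq_smul (v := fun i : Fin (p + q + 1) => f.coeff i) ?_ ?_
  · intro h
    have := congrFun h ⟨p + q, by omega⟩
    simp [← hdeg, hmonic.coeff_natDegree] at this
  · rw [vecMul_LnOver _ _ (coeff_eq_zero_of_natDegree_lt (by omega)),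
      LnOperator_X_sub_C_pow_mul_X_sub_C_pow hαβ]
    ext j
    simp only [coeff_C_mul, Pi.smul_apply, smul_eq_mul, f]

end PolynomialModel

theorem charpoly_LnOver {K : Type*} [Field K] [CharZero K] {α β : K} (hαβ : α * β = -1)
    (hne : α ≠ β) (n : ℕ) :
    (LnOver K n (α + β)).charpoly =
      ∏ p ∈ range n, (X - C (((n : K) - p) * α + ((p : K) + 1) * β)) := by
  refine eq_prod_X_sub_C_of_monic_of_isRoot (charpoly_monic _) ?_ (fun p hp => ?_) (by simp)
  · intro p _ p' _ h
    have : ((p' : K) - p) * (α - β) = 0 := by linear_combination h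
    have := (mul_eq_zero.mp this).resolve_right (sub_ne_zero.mpr hne)
    exact_mod_cast (sub_eq_zero.mp this).symm
  · obtain ⟨q, rfl⟩ : ∃ q, n = p + q + 1 := ⟨n - p - 1, by simp at hp; omega⟩
    have heig : ((↑(p + q + 1) : K) - p) * α + ((p : K) + 1) * β
        = ((q : K) + 1) * α + ((p : K) + 1) * β := by
      push_cast; ring
    rw [heig]
    exact isRoot_charpoly_LnOver hαβ p q

theorem charpoly_LnOver_of_even {K : Type*} [Field K] [CharZero K] {α β : K}
    (hαβ : α * β = -1) (hne : α ≠ β) {n : ℕ} (hn : Even n) :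
    (LnOver K n (α + β)).charpoly = ∏ i ∈ range (n / 2),
      ((X - C (((i : K) + 1) * (α + β))) * (X - C (((n : K) - i) * (α + β)))
        - C (((n : K) - 1 - 2 * i) ^ 2)) := by
  obtain ⟨m, rfl⟩ := hn
  rw [charpoly_LnOver hαβ hne, prod_range_add_self_eq_prod_mul_reflect,
    show (m + m) / 2 = m by omega]
  refine prod_congr rfl fun i hi => X_sub_C_mul_X_sub_C_eq_of_add_eq_of_mul_eq ?_ ?_ <;>
    rw [Nat.cast_sub (by simp at hi; omega), Nat.cast_sub (by simp at hi; omega)] <;>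
    push_cast
  · ring
  · linear_combination ((m : K) + m - 1 - 2 * i) ^ 2 * hαβ

theorem stmt_16_general (n : ℕ) (heven : Even n) (a : ℚ) :
    Matrix.charpoly (Ln n a) =
      ∏ i ∈ Finset.range (n / 2),
        ((Polynomial.X - Polynomial.C (((i : ℚ) + 1) * a)) *
            (Polynomial.X - Polynomial.C (((n : ℚ) - i) * a))
          - Polynomial.C (((n : ℚ) - 1 - 2 * i) ^ 2)) := by
  obtain ⟨α, β, hadd, hmul, hne⟩ := exists_add_eq_mul_eq_neg_one a
  apply map_injective (Rat.castHom ℝ) (Rat.castHom ℝ).injective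
  rw [← charpoly_map, Ln_map_ratCast, ← hadd, charpoly_LnOver_of_even hmul hne heven, hadd,
    Polynomial.map_prod]
  simp

/-- Let `n ≥ 2` be even and `a ∈ ℚ`. The characteristic polynomial of `L_n(a)` is
`∏_{i=1}^{n/2} ((X − i·a)·(X − (n+1−i)·a) − (n+1−2i)²)`. -/
theorem stmt_16 (n : ℕ) (hn : 2 ≤ n) (heven : Even n) (a : ℚ) :
    Matrix.charpoly (Ln n a) =
      ∏ i ∈ Finset.range (n / 2),
        ((Polynomial.X - Polynomial.C (((i : ℚ) + 1) * a)) *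
            (Polynomial.X - Polynomial.C (((n : ℚ) - i) * a))
          - Polynomial.C (((n : ℚ) - 1 - 2 * i) ^ 2)) :=
  stmt_16_general n heven a
end

section
/- Let n ≥ 1 be an integer. For 1 ≤ k ≤ n let α_k ∈ ℚ^n be the row vector whose j-th coordinate, for 1 ≤ j ≤ n, is the binomial coefficient binomial(k−1, j−1). Then for every k with 1 ≤ k ≤ n, the row-vector–matrix product satisfies α_k · A_n = k · α_k; that is, α_k is a left eigenvector of A_n with eigenvalue k. -/
open Finset

theorem vecMul_An_apply {n : ℕ} (f : ℕ → ℚ) (hf : f n = 0) (j : Fin n) :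
    Matrix.vecMul (fun i : Fin n => f i) (An n) j = (j + 1) * (f j + f (j + 1)) := by
  let g : ℕ → ℚ := fun i =>
    f i * (if i = j then (i : ℚ) + 1 else if j.val + 1 = i then (i : ℚ) else 0)
  have hsum : Matrix.vecMul (fun i : Fin n => f i) (An n) j = ∑ i ∈ range n, g i := by
    simp only [Matrix.vecMul, dotProduct, An, Matrix.of_apply, Fin.ext_iff]
    exact Fin.sum_univ_eq_sum_range g n
  have hg_diag : g j = (j + 1) * f j := by simp [g, mul_comm]
  have hg_subdiag : g (j + 1) = (j + 1) * f (j + 1) := by push_cast [g]; simp [mul_comm]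
  rw [hsum, sum_eq_add (j : ℕ) (j + 1) (by omega), hg_diag, hg_subdiag, mul_add]
  · intro c _ hc
    simp [g, hc.1, Ne.symm hc.2]
  · exact fun h => absurd (mem_range.2 j.isLt) h
  · intro h
    have hlast : (j : ℕ) + 1 = n := by simp only [mem_range, not_lt] at h; omega
    simp [g, hlast, hf]

theorem add_one_mul_choose_eq_add_one_mul_add (m j : ℕ) :
    ((m + 1) * m.choose j : ℚ) = (j + 1) * (m.choose j + m.choose (j + 1)) := by
  exact_mod_cast (Nat.add_one_mul_choose_eq m j).trans (by rw [Nat.choose_succ_succ, mul_comm])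

theorem stmt_17_general (n : ℕ) :
    ∀ k : ℕ, 1 ≤ k → k ≤ n →
      Matrix.vecMul (fun j : Fin n => (Nat.choose (k - 1) j.val : ℚ)) (An n) =
        fun j : Fin n => (k : ℚ) * (Nat.choose (k - 1) j.val : ℚ) := by
  intro k hk1 hkn
  obtain ⟨m, rfl⟩ : ∃ m, k = m + 1 := ⟨k - 1, by omega⟩
  have hvanish : (m.choose n : ℚ) = 0 := by exact_mod_cast Nat.choose_eq_zero_of_lt hkn
  funext j
  rw [add_tsub_cancel_right, vecMul_An_apply (fun i => (m.choose i : ℚ)) hvanish j]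
  push_cast
  exact (add_one_mul_choose_eq_add_one_mul_add m j).symm

/-- Let `n ≥ 1`. For `1 ≤ k ≤ n`, the row vector `α_k` with `j`-th coordinate
(1-based) `C(k−1, j−1)` satisfies `α_k · A_n = k·α_k`, i.e. it is a left
eigenvector of `A_n` with eigenvalue `k`. -/
theorem stmt_17 (n : ℕ) (hn : 1 ≤ n) :
    ∀ k : ℕ, 1 ≤ k → k ≤ n →
      Matrix.vecMul (fun j : Fin n => (Nat.choose (k - 1) j.val : ℚ)) (An n) =
        fun j : Fin n => (k : ℚ) * (Nat.choose (k - 1) j.val : ℚ) :=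
  stmt_17_general n
end

section
/- Let n ≥ 1 be an integer. Then the characteristic polynomial of B_n equals (X − (n+1))^n in ℚ[X], and every row vector v ∈ ℚ^n satisfying v · B_n = (n+1)·v is a scalar multiple of the row vector α_n whose j-th coordinate, for 1 ≤ j ≤ n, is binomial(n−1, j−1). -/
/-!
Read a row vector `v` as the polynomial `∑ⱼ vⱼ xʲ` of degree `< n`. Then `v ↦ v B_n` becomes
`p ↦ (1 + x)² p' + (2 + (1 - n) x) p`, which sends `(1 + x)ᵏ` to
`(n + 1) (1 + x)ᵏ + (k + 1 - n) (1 + x)ᵏ⁺¹`. In the basis `(1 + x)ᵏ`, i.e. after conjugating by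
the Pascal matrix `P`, the matrix `B_n` becomes the upper bidiagonal matrix `T_n` with diagonal
`n + 1` and superdiagonal `k + 1 - n`: `P B_n = T_n P`. This gives the characteristic polynomial.
A left eigenvector `c` of `T_n` vanishes off the last coordinate because `k + 1 - n ≠ 0` for
`k < n - 1`, so `c P` is proportional to the last row `(C(n-1, j))ⱼ` of `P`.
-/

open Finset Matrix Polynomial

variable {R : Type*}

lemma Nat.cast_choose_succ_right_eq [Ring R] (k j : ℕ) :
    (k.choose (j + 1) : R) * (j + 1) = k.choose j * (k - j) := by
  rcases le_or_gt j k with h | h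
  · rw [← Nat.cast_sub h]
    exact_mod_cast congrArg (Nat.cast : ℕ → R) (Nat.choose_succ_right_eq k j)
  · simp [Nat.choose_eq_zero_of_lt h, Nat.choose_eq_zero_of_lt (Nat.lt_succ_of_lt h)]

lemma Fin.sum_ite_val_eq [AddCommMonoid R] {n : ℕ} (m : ℕ) (f : Fin n → R) :
    ∑ i : Fin n, (if i.val = m then f i else 0) = if h : m < n then f ⟨m, h⟩ else 0 := by
  split_ifs with h
  · simp [← Fin.ext_iff (b := ⟨m, h⟩)]
  · exact sum_eq_zero fun i _ => if_neg (by omega)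

def pascal (R : Type*) [NatCast R] (n : ℕ) : Matrix (Fin n) (Fin n) R :=
  of fun k j => (k.val.choose j.val : R)

lemma pascal_isLowerTriangular [Semiring R] (n : ℕ) : (pascal R n).IsLowerTriangular :=
  fun k j h => by simp [pascal, Nat.choose_eq_zero_of_lt (show k.val < j.val from h)]

lemma det_pascal [CommRing R] (n : ℕ) : (pascal R n).det = 1 := by
  rw [det_of_isLowerTriangular _ (pascal_isLowerTriangular n)]
  simp [pascal]

lemma isUnit_pascal [CommRing R] (n : ℕ) : IsUnit (pascal R n) :=
  (isUnit_iff_isUnit_det _).2 (by simp [det_pascal])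

def Tn (n : ℕ) : Matrix (Fin n) (Fin n) ℚ :=
  of fun k j => if k = j then (n : ℚ) + 1 else if k.val + 1 = j.val then (k : ℚ) + 1 - n else 0

lemma Tn_isUpperTriangular (n : ℕ) : (Tn n).IsUpperTriangular :=
  fun k j (h : j.val < k.val) => by simp [Tn, Fin.ext_iff, h.ne', show k.val + 1 ≠ j.val by omega]

lemma charpoly_Tn (n : ℕ) : (Tn n).charpoly = (X - C ((n : ℚ) + 1)) ^ n := by
  rw [charpoly_of_isUpperTriangular _ (Tn_isUpperTriangular n)]
  simp [Tn]

lemma Bn_apply (n : ℕ) (i j : Fin n) : Bn n i j =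
    (if i.val = j.val then 2 * ((j : ℚ) + 1) else 0) + (if i.val = j.val + 1 then (j : ℚ) + 1 else 0)
      + (if i.val + 1 = j.val then (j : ℚ) - n else 0) := by
  obtain ⟨i, hi⟩ := i
  obtain ⟨j, hj⟩ := j
  simp only [Bn, of_apply, Fin.ext_iff]
  split_ifs <;> first | omega | (subst_vars; push_cast; ring)

lemma Tn_apply (n : ℕ) (k i : Fin n) : Tn n k i =
    (if i.val = k.val then (n : ℚ) + 1 else 0) + (if i.val = k.val + 1 then (k : ℚ) + 1 - n else 0) := by
  obtain ⟨k, hk⟩ := k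
  obtain ⟨i, hi⟩ := i
  simp only [Tn, of_apply, Fin.ext_iff]
  split_ifs <;> first | omega | (subst_vars; ring)

lemma pascal_mul_Bn_apply_zero (n : ℕ) (k : Fin n) (hn : 0 < n) :
    (pascal ℚ n * Bn n) k ⟨0, hn⟩ = k + 2 := by
  simp only [mul_apply, pascal, of_apply, Bn_apply, mul_add, mul_ite, mul_zero, sum_add_distrib,
    Fin.sum_ite_val_eq, hn, ↓reduceDIte, dite_eq_ite, Nat.add_eq_zero_iff, one_ne_zero, and_false,
    ↓reduceIte, Nat.choose_zero_right, Nat.choose_one_right, CharP.cast_eq_zero, Nat.cast_one,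
    zero_add, add_zero, mul_one, one_mul]
  split_ifs with h
  · ring
  · simp [show (k : ℕ) = 0 by omega]

lemma pascal_mul_Bn_apply_succ (n : ℕ) (k : Fin n) (m : ℕ) (hm : m + 1 < n) :
    (pascal ℚ n * Bn n) k ⟨m + 1, hm⟩ = 2 * (m + 2) * k.val.choose (m + 1)
      + (m + 2) * k.val.choose (m + 2) + (m + 1 - n) * k.val.choose m := by
  simp only [mul_apply, pascal, of_apply, Bn_apply, mul_add, mul_ite, mul_zero, sum_add_distrib,
    Fin.sum_ite_val_eq, hm, show m < n by omega, ↓reduceDIte, dite_eq_ite, Nat.add_right_cancel_iff,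
    Nat.cast_add, Nat.cast_one, mul_one]
  split_ifs with h
  · ring
  · simp [Nat.choose_eq_zero_of_lt (show k.val < m + 2 by omega)]
    ring

lemma Tn_mul_pascal_apply (n : ℕ) (k j : Fin n) :
    (Tn n * pascal ℚ n) k j = (n + 1) * k.val.choose j + (k + 1 - n) * (k.val + 1).choose j := by
  simp [mul_apply, Tn_apply, pascal, add_mul, ite_mul, sum_add_distrib, Fin.sum_ite_val_eq]
  exact fun h => .inl (sub_eq_zero.2 (by exact_mod_cast (show k.val + 1 = n by omega)))

lemma pascal_mul_Bn (n : ℕ) : pascal ℚ n * Bn n = Tn n * pascal ℚ n := by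
  ext k ⟨_ | m, hj⟩
  · rw [pascal_mul_Bn_apply_zero, Tn_mul_pascal_apply]
    simp only [Nat.choose_zero_right, Nat.cast_one, mul_one]
    ring
  · rw [pascal_mul_Bn_apply_succ, Tn_mul_pascal_apply, Nat.choose_succ_succ', Nat.cast_add]
    have e1 := Nat.cast_choose_succ_right_eq (R := ℚ) k (m + 1)
    have e2 := Nat.cast_choose_succ_right_eq (R := ℚ) k m
    push_cast at e1 e2 ⊢
    linear_combination e1 + e2

lemma charpoly_Bn (n : ℕ) : (Bn n).charpoly = (X - C ((n : ℚ) + 1)) ^ n := by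
  have hdet := (isUnit_iff_isUnit_det _).1 (isUnit_pascal (R := ℚ) n)
  calc (Bn n).charpoly = ((pascal ℚ n)⁻¹ * (Tn n * pascal ℚ n)).charpoly := by
        rw [← pascal_mul_Bn, ← mul_assoc, nonsing_inv_mul _ hdet, one_mul]
    _ = (Tn n).charpoly := by rw [charpoly_mul_comm, mul_assoc, mul_nonsing_inv _ hdet, mul_one]
    _ = _ := charpoly_Tn n

lemma vecMul_Tn_apply_succ (n : ℕ) (c : Fin n → ℚ) (m : ℕ) (hm : m + 1 < n) :
    (c ᵥ* Tn n) ⟨m + 1, hm⟩ = (n + 1) * c ⟨m + 1, hm⟩ + (m + 1 - n) * c ⟨m, by omega⟩ := by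
  simp [vecMul, dotProduct, Tn_apply, mul_add, mul_ite, sum_add_distrib, Fin.sum_ite_val_eq,
    eq_comm (a := m + 1), eq_comm (a := m), hm, show m < n by omega]
  ring

lemma eq_zero_of_vecMul_Tn_eq (n : ℕ) (c : Fin n → ℚ) (hc : c ᵥ* Tn n = ((n : ℚ) + 1) • c)
    (i : Fin n) (hi : i.val + 1 < n) : c i = 0 := by
  have h := congrFun hc ⟨i + 1, hi⟩
  rw [vecMul_Tn_apply_succ] at h
  have hne : (i : ℚ) + 1 - n ≠ 0 := sub_ne_zero.2 (by exact_mod_cast hi.ne)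
  simp only [Pi.smul_apply, smul_eq_mul, add_eq_left, mul_eq_zero] at h
  exact h.resolve_left hne

lemma exists_eq_smul_of_vecMul_Bn_eq (n : ℕ) (v : Fin n → ℚ)
    (hv : v ᵥ* Bn n = ((n : ℚ) + 1) • v) :
    ∃ t : ℚ, v = t • fun j : Fin n => ((n - 1).choose j.val : ℚ) := by
  obtain ⟨c, rfl⟩ := vecMul_surjective_iff_isUnit.2 (isUnit_pascal n) v
  have hc : c ᵥ* Tn n = ((n : ℚ) + 1) • c := vecMul_injective_iff_isUnit.2 (isUnit_pascal n) <| by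
    simp only [vecMul_vecMul, ← pascal_mul_Bn, ← hv, smul_vecMul]
  refine ⟨∑ i, c i, funext fun j => ?_⟩
  simp only [vecMul, dotProduct, pascal, of_apply, Pi.smul_apply, smul_eq_mul, sum_mul]
  refine sum_congr rfl fun i _ => ?_
  rcases eq_or_ne (i.val + 1) n with h | h
  · rw [show n - 1 = i by omega]
  · simp [eq_zero_of_vecMul_Tn_eq n c hc i (by omega)]

theorem stmt_18_general (n : ℕ) :
    Matrix.charpoly (Bn n) = (Polynomial.X - Polynomial.C ((n : ℚ) + 1)) ^ n ∧
    ∀ v : Fin n → ℚ, Matrix.vecMul v (Bn n) = ((n : ℚ) + 1) • v →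
      ∃ t : ℚ, v = t • fun j : Fin n => (Nat.choose (n - 1) j.val : ℚ) :=
  ⟨charpoly_Bn n, exists_eq_smul_of_vecMul_Bn_eq n⟩

/-- Let `n ≥ 1`. The characteristic polynomial of `B_n` is `(X − (n+1))^n`, and
every row vector `v` with `v·B_n = (n+1)·v` is a scalar multiple of the row
vector `α_n` with `j`-th coordinate (1-based) `C(n−1, j−1)`. -/
theorem stmt_18 (n : ℕ) (hn : 1 ≤ n) :
    Matrix.charpoly (Bn n) = (Polynomial.X - Polynomial.C ((n : ℚ) + 1)) ^ n ∧
    ∀ v : Fin n → ℚ, Matrix.vecMul v (Bn n) = ((n : ℚ) + 1) • v →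
      ∃ t : ℚ, v = t • fun j : Fin n => (Nat.choose (n - 1) j.val : ℚ) :=
  stmt_18_general n
end
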